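/- arXiv:2510.24326 — 13 statements merged into one kernel-verified Lean document; each statement's English description precedes it below -/
import Mathlib

section
/- Let A be a C*-algebra (not necessarily unital) and let x ∈ A be selfadjoint, with x = x₊ − x₋ its unique decomposition into positive parts x₊, x₋ ≥ 0 satisfying x₊·x₋ = 0 (given by continuous functional calculus). Then the distance from x to the positive cone of A equals ‖x₋‖, and the distance from x to the negative of the positive cone equals ‖x₊‖; that is, Metric.infDist x {a ∈ A | 0 ≤ a} = ‖x₋‖ and Metric.infDist x {a ∈ A | 0 ≤ -a} = ‖x₊‖. -/
/-!
For `b ≥ 0`, compressing `b - x` by `x⁻` kills `x⁺` (because `x⁻ * x⁺ = 0`) and leaves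
`x⁻ * b * x⁻ + (x⁻)³ ≥ (x⁻)³`. As `‖(x⁻)³‖ = ‖x⁻‖³` by the C⋆-identity while compression by `x⁻`
multiplies norms by at most `‖x⁻‖²`, this gives `‖x⁻‖ ≤ ‖x - b‖`, with equality at `b = x⁺`.
The negative cone is the image of the positive one under `a ↦ -a`, and `(-x)⁻ = x⁺`.
-/

theorem Metric.infDist_neg_neg {E : Type*} [SeminormedAddCommGroup E] (x : E) (s : Set E) :
    Metric.infDist (-x) (-s) = Metric.infDist x s := by
  rw [← Set.image_neg_eq_neg, Metric.infDist_image isometry_neg]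

theorem IsSelfAdjoint.norm_pow_three_le {E : Type*} [NonUnitalNormedRing E] [StarRing E]
    [CStarRing E] {a : E} (ha : IsSelfAdjoint a) : ‖a‖ ^ 3 ≤ ‖a * a * a‖ := by
  have ha2 : IsSelfAdjoint (a * a) := by simpa [ha.star_eq] using IsSelfAdjoint.star_mul_self a
  rcases (norm_nonneg a).eq_or_lt with h0 | h0
  · simp [← h0]
  refine le_of_mul_le_mul_left ?_ h0
  calc ‖a‖ * ‖a‖ ^ 3 = ‖(a * a) * (a * a)‖ := by
        rw [ha2.norm_mul_self, ha.norm_mul_self]; ring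
    _ = ‖a * (a * a * a)‖ := by simp only [mul_assoc]
    _ ≤ ‖a‖ * ‖a * a * a‖ := norm_mul_le _ _

section CStarAlgebra

variable {A : Type*} [NonUnitalCStarAlgebra A] [PartialOrder A] [StarOrderedRing A]

theorem CStarAlgebra.norm_le_of_mul_mul_self_le {c y : A} (hc : 0 ≤ c)
    (h : c * c * c ≤ c * y * c) : ‖c‖ ≤ ‖y‖ := by
  have hc' : IsSelfAdjoint c := .of_nonneg hc
  rcases (norm_nonneg c).eq_or_lt with h0 | h0
  · simp [← h0]
  refine le_of_mul_le_mul_left ?_ (pow_pos h0 2)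
  calc ‖c‖ ^ 2 * ‖c‖ = ‖c‖ ^ 3 := by ring
    _ ≤ ‖c * c * c‖ := hc'.norm_pow_three_le
    _ ≤ ‖c * y * c‖ := by
        refine CStarAlgebra.norm_le_norm_of_nonneg_of_le ?_ h
        simpa [hc'.star_eq] using star_left_conjugate_nonneg hc c
    _ ≤ ‖c‖ * ‖y‖ * ‖c‖ := norm_mul₃_le
    _ = ‖c‖ ^ 2 * ‖y‖ := by ring

theorem CFC.norm_negPart_le_norm_sub_of_nonneg {x b : A} (hx : IsSelfAdjoint x) (hb : 0 ≤ b) :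
    ‖x⁻‖ ≤ ‖x - b‖ := by
  have hxm : IsSelfAdjoint x⁻ := .of_nonneg (CFC.negPart_nonneg x)
  have hcompress : x⁻ * (b - x) * x⁻ = x⁻ * b * x⁻ + x⁻ * x⁻ * x⁻ := by
    calc x⁻ * (b - x) * x⁻ = x⁻ * (b - (x⁺ - x⁻)) * x⁻ := by rw [CFC.posPart_sub_negPart x hx]
      _ = x⁻ * b * x⁻ + x⁻ * x⁻ * x⁻ := by
          simp only [mul_sub, sub_mul, CFC.negPart_mul_posPart, zero_mul]
          abel
  rw [norm_sub_rev]
  refine CStarAlgebra.norm_le_of_mul_mul_self_le (CFC.negPart_nonneg x) ?_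
  rw [hcompress, le_add_iff_nonneg_left]
  simpa [hxm.star_eq] using star_left_conjugate_nonneg hb x⁻

theorem CFC.infDist_nonneg_eq_norm_negPart {x : A} (hx : IsSelfAdjoint x) :
    Metric.infDist x {a : A | 0 ≤ a} = ‖x⁻‖ := by
  refine le_antisymm ?_ ?_
  · calc Metric.infDist x {a : A | 0 ≤ a} ≤ dist x x⁺ :=
          Metric.infDist_le_dist_of_mem (CFC.posPart_nonneg x)
      _ = ‖x⁺ - (x⁺ - x⁻)‖ := by rw [dist_comm, dist_eq_norm, CFC.posPart_sub_negPart x hx]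
      _ = ‖x⁻‖ := by rw [sub_sub_cancel]
  · refine (Metric.le_infDist ⟨0, le_rfl⟩).mpr fun b hb => ?_
    rw [dist_eq_norm]
    exact CFC.norm_negPart_le_norm_sub_of_nonneg hx hb

theorem CFC.infDist_nonpos_eq_norm_posPart {x : A} (hx : IsSelfAdjoint x) :
    Metric.infDist x {a : A | 0 ≤ -a} = ‖x⁺‖ := by
  rw [← CFC.negPart_neg, ← CFC.infDist_nonneg_eq_norm_negPart hx.neg,
    ← Metric.infDist_neg_neg (-x), neg_neg, Set.neg_ofPred]

end CStarAlgebra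

/-- In a (not necessarily unital) C*-algebra `A`, if `x` is selfadjoint
with positive/negative parts `xp`, `xm` (i.e. `0 ≤ xp`, `0 ≤ xm`, `x = xp - xm`,
`xp * xm = 0`), then the distance of `x` to the positive cone is `‖xm‖` and the distance
of `x` to the negative of the positive cone is `‖xp‖`. -/
theorem stmt_0 {A : Type*} [NonUnitalCStarAlgebra A] [PartialOrder A] [StarOrderedRing A]
    (x xp xm : A) (hx : IsSelfAdjoint x)
    (hxp : 0 ≤ xp) (hxm : 0 ≤ xm) (hsub : x = xp - xm) (horth : xp * xm = 0) :
    Metric.infDist x {a : A | 0 ≤ a} = ‖xm‖ ∧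
      Metric.infDist x {a : A | 0 ≤ -a} = ‖xp‖ := by
  obtain ⟨hpos, hneg⟩ := CFC.posPart_negPart_unique hsub horth hxp hxm
  exact ⟨hneg ▸ CFC.infDist_nonneg_eq_norm_negPart hx,
    hpos ▸ CFC.infDist_nonpos_eq_norm_posPart hx⟩
end

section
/- Let A be a C*-algebra, E ⊆ A a selfadjoint subspace, n ∈ ℕ, and X ∈ Mₙ(E) selfadjoint. Then the following are equivalent: (i) Metric.infDist X Mₙ(E)₊ ≤ 1; (ii) for every contractive positive functional φ on Mₙ(E), one has Re(φ X) ≥ −1 (note φ X is real since X is selfadjoint and φ is star-preserving). -/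
/-!
If `φ` is positive and contractive and `Y ∈ Mₙ(E)₊`, then
`Re φ X = φ Y + Re φ (X - Y) ≥ -‖X - Y‖`, so `Re φ X ≥ -dist(X, Mₙ(E)₊)`.
Conversely, if `d := dist(X, Mₙ(E)₊) > 0`, Hahn–Banach separates `X` from the open convex set
`Mₙ(E)₊ + ball 0 d`; since `Mₙ(E)₊` is a cone, the separating real functional, suitably
rescaled, is nonnegative on `Mₙ(E)₊`, has norm at most one and takes the value `-d` at `X`.
Its complexification, averaged with its conjugate under the involution, is a contractive
positive functional `φ` on `Mₙ(E)` with `Re φ X = -d`, because `X` is selfadjoint.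
-/

open scoped ComplexOrder

noncomputable section

/-- The `n`-th matrix level `Mₙ(E)` of a subspace `E` of a C*-algebra `A`, realized inside a
C*-algebra `M` which is given together with a ⋆-algebra isomorphism
`e : Mₙ(A) ≃⋆ₐ[ℂ] M` (recall that the C*-norm on `Mₙ(A)` is unique, so this fully
determines the norm and order structure of `Mₙ(E)`). -/
def matrixLevel {A M : Type*} [NonUnitalCStarAlgebra A] [NonUnitalCStarAlgebra M] {n : ℕ}
    (E : Submodule ℂ A) (e : Matrix (Fin n) (Fin n) A ≃⋆ₐ[ℂ] M) : Submodule ℂ M where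
  carrier := {X : M | ∀ i j, e.symm X i j ∈ E}
  add_mem' := by
    intro a b ha hb i j
    rw [map_add, Matrix.add_apply]
    exact E.add_mem (ha i j) (hb i j)
  zero_mem' := by
    intro i j
    rw [map_zero]
    exact E.zero_mem
  smul_mem' := by
    intro c a ha i j
    rw [map_smul, Matrix.smul_apply]
    exact E.smul_mem c (ha i j)

/-- `φ` is a (selfadjoint) positive functional on the subspace `S` of a C*-algebra:
it is star-preserving and takes nonnegative (real) values on the positive elements of `S`. -/
def IsPositiveFunctional {B : Type*} [NonUnitalCStarAlgebra B] [PartialOrder B]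
    (S : Submodule ℂ B) (φ : S →L[ℂ] ℂ) : Prop :=
  (∀ (x : B) (hx : x ∈ S) (hsx : star x ∈ S), φ ⟨star x, hsx⟩ = starRingEnd ℂ (φ ⟨x, hx⟩)) ∧
    ∀ (x : B) (hx : x ∈ S), 0 ≤ x → 0 ≤ φ ⟨x, hx⟩

open Metric
open scoped Pointwise

section ConeDistance

variable {E : Type*} [NormedAddCommGroup E] [NormedSpace ℝ E]

theorem PointedCone.exists_dual_nonneg_eq_neg_infDist (C : PointedCone ℝ E) {x : E}
    (hx : 0 < infDist x C) :
    ∃ g : StrongDual ℝ E, ‖g‖ ≤ 1 ∧ (∀ y ∈ C, 0 ≤ g y) ∧ g x = -infDist x C := by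
  set d := infDist x C
  have hxU : x ∉ (C : Set E) + ball 0 d := by
    rintro ⟨y, hy, z, hz, rfl⟩
    have := infDist_le_dist_of_mem (x := y + z) hy
    rw [dist_eq_norm, add_sub_cancel_left] at this
    exact (mem_ball_zero_iff.mp hz).not_ge this
  obtain ⟨f, hf⟩ := geometric_hahn_banach_open_point (C.convex.add (convex_ball 0 d))
    isOpen_ball.add_left hxU
  have hfC : ∀ y ∈ C, f y < f x := fun y hy ↦ by
    simpa using hf (y + 0) ⟨y, hy, 0, mem_ball_self hx, rfl⟩
  have hfball : ∀ z ∈ ball (0 : E) d, f z < f x := fun z hz ↦ by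
    simpa using hf (0 + z) ⟨0, C.zero_mem, z, hz, rfl⟩
  have hc : 0 < f x := by simpa using hfC 0 C.zero_mem
  have hf_nonpos : ∀ y ∈ C, f y ≤ 0 := by
    intro y hy
    by_contra! hpos
    have := hfC ((f x / f y) • y) (C.smul_mem (by positivity) hy)
    rw [map_smul, smul_eq_mul, div_mul_cancel₀ _ hpos.ne'] at this
    exact this.false
  have hfclosedBall : ∀ z ∈ closedBall (0 : E) d, f z ≤ f x := by
    rw [← closure_ball 0 hx.ne']
    exact closure_minimal (fun z hz ↦ (hfball z hz).le)
      (isClosed_le f.continuous continuous_const)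
  have hnorm : ‖f‖ ≤ f x / d := by
    refine ContinuousLinearMap.opNorm_bound_of_ball_bound hx _ f fun z hz ↦ ?_
    have hneg := hfclosedBall (-z) (by simpa using hz)
    rw [map_neg] at hneg
    exact abs_le.mpr ⟨by linarith, hfclosedBall z hz⟩
  refine ⟨-(d / f x) • f, ?_, fun y hy ↦ ?_, ?_⟩
  · calc ‖-(d / f x) • f‖ = d / f x * ‖f‖ := by
          rw [norm_smul, norm_neg, Real.norm_of_nonneg (by positivity)]
      _ ≤ d / f x * (f x / d) := by gcongr
      _ = 1 := by field_simp
  · simpa using mul_nonpos_of_nonneg_of_nonpos (by positivity) (hf_nonpos y hy)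
  · simp [div_mul_cancel₀ _ hc.ne']

end ConeDistance

section StarFunctional

variable {M : Type*} [NormedAddCommGroup M] [NormedSpace ℂ M] [StarAddMonoid M]
  [NormedStarGroup M] [StarModule ℂ M]

theorem StrongDual.exists_map_star_eq_conj (g : StrongDual ℝ M) :
    ∃ ψ : StrongDual ℂ M, ‖ψ‖ ≤ ‖g‖ ∧ (∀ x, ψ (star x) = starRingEnd ℂ (ψ x)) ∧
      ∀ x, IsSelfAdjoint x → ψ x = g x := by
  set φ₀ : StrongDual ℂ M := g.extendRCLike
  have hbound : ∀ x, ‖(φ₀ x + starRingEnd ℂ (φ₀ (star x))) / 2‖ ≤ ‖g‖ * ‖x‖ := by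
    intro x
    have h₁ : ‖φ₀ x‖ ≤ ‖g‖ * ‖x‖ := by simpa [φ₀, norm_extendRCLike] using φ₀.le_opNorm x
    have h₂ : ‖φ₀ (star x)‖ ≤ ‖g‖ * ‖x‖ := by
      simpa [φ₀, norm_extendRCLike, norm_star] using φ₀.le_opNorm (star x)
    calc ‖(φ₀ x + starRingEnd ℂ (φ₀ (star x))) / 2‖
        ≤ (‖φ₀ x‖ + ‖φ₀ (star x)‖) / 2 := by
          rw [norm_div, Complex.norm_two, ← RCLike.norm_conj (φ₀ (star x))]
          gcongr
          exact norm_add_le _ _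
      _ ≤ ‖g‖ * ‖x‖ := by linarith
  let ψ : StrongDual ℂ M := LinearMap.mkContinuous
    { toFun := fun x ↦ (φ₀ x + starRingEnd ℂ (φ₀ (star x))) / 2
      map_add' := fun x y ↦ by simp only [star_add, map_add]; ring
      map_smul' := fun c x ↦ by
        simp only [star_smul, map_smul, smul_eq_mul, map_mul, RingHom.id_apply, RCLike.star_def,
          Complex.conj_conj]
        ring }
    ‖g‖ hbound
  refine ⟨ψ, LinearMap.mkContinuous_norm_le _ (norm_nonneg g) _, fun x ↦ ?_, fun x hx ↦ ?_⟩
  · change (φ₀ (star x) + starRingEnd ℂ (φ₀ (star (star x)))) / 2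
      = starRingEnd ℂ ((φ₀ x + starRingEnd ℂ (φ₀ (star x))) / 2)
    simp only [star_star, map_div₀, map_add, Complex.conj_conj, map_ofNat]
    ring
  · change (φ₀ x + starRingEnd ℂ (φ₀ (star x))) / 2 = g x
    rw [hx.star_eq, Complex.add_conj, Complex.ofReal_mul, Complex.ofReal_ofNat,
      mul_div_cancel_left₀ _ two_ne_zero]
    exact congrArg _ (g.re_extendRCLike_apply (𝕜 := ℂ) x)

end StarFunctional

section PositiveFunctional

variable {M : Type*} [NonUnitalCStarAlgebra M] [PartialOrder M]

theorem IsPositiveFunctional.neg_infDist_le_re {S : Submodule ℂ M} {φ : S →L[ℂ] ℂ}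
    (hφ : IsPositiveFunctional S φ) (hφ₁ : ‖φ‖ ≤ 1) {x : M} (hx : x ∈ S) :
    -infDist x {y | y ∈ S ∧ 0 ≤ y} ≤ (φ ⟨x, hx⟩).re := by
  have hne : ({y | y ∈ S ∧ 0 ≤ y} : Set M).Nonempty := ⟨0, S.zero_mem, le_rfl⟩
  rw [neg_le, le_infDist hne]
  rintro y ⟨hyS, hy⟩
  have hxy : x - y ∈ S := S.sub_mem hx hyS
  have hsplit : (⟨x, hx⟩ : S) = ⟨y, hyS⟩ + ⟨x - y, hxy⟩ := by ext; simp
  have hφy : 0 ≤ (φ ⟨y, hyS⟩).re := (Complex.le_def.mp (hφ.2 y hyS hy)).1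
  have hφxy : -(φ ⟨x - y, hxy⟩).re ≤ dist x y :=
    calc -(φ ⟨x - y, hxy⟩).re ≤ ‖φ ⟨x - y, hxy⟩‖ := (neg_le_abs _).trans (Complex.abs_re_le_norm _)
      _ ≤ ‖φ‖ * ‖x - y‖ := φ.le_opNorm _
      _ ≤ dist x y := by rw [dist_eq_norm]; exact mul_le_of_le_one_left (norm_nonneg _) hφ₁
  rw [hsplit, map_add, Complex.add_re]
  linarith

variable [StarOrderedRing M]

theorem exists_isPositiveFunctional_re_eq_neg_infDist (S : Submodule ℂ M) {x : M} (hxS : x ∈ S)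
    (hx : IsSelfAdjoint x) (hd : 0 < infDist x {y | y ∈ S ∧ 0 ≤ y}) :
    ∃ φ : S →L[ℂ] ℂ, IsPositiveFunctional S φ ∧ ‖φ‖ ≤ 1 ∧
      (φ ⟨x, hxS⟩).re = -infDist x {y | y ∈ S ∧ 0 ≤ y} := by
  let C : PointedCone ℝ M :=
    PointedCone.ofSubmodule (S.restrictScalars ℝ) ⊓ PointedCone.positive ℝ M
  obtain ⟨g, hg₁, hgC, hgx⟩ := C.exists_dual_nonneg_eq_neg_infDist hd
  obtain ⟨ψ, hψg, hψstar, hψsa⟩ := g.exists_map_star_eq_conj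
  refine ⟨ψ.comp S.subtypeL, ⟨fun y _ _ ↦ hψstar y, fun y hyS hy ↦ ?_⟩, ?_, ?_⟩
  · change 0 ≤ ψ y
    rw [hψsa y (IsSelfAdjoint.of_nonneg hy), Complex.zero_le_real]
    exact hgC y ⟨hyS, hy⟩
  · calc ‖ψ.comp S.subtypeL‖ ≤ ‖ψ‖ * ‖S.subtypeL‖ := ψ.opNorm_comp_le _
      _ ≤ 1 * 1 := by gcongr; exacts [hψg.trans hg₁, S.norm_subtypeL_le]
      _ = 1 := one_mul 1
  · change (ψ x).re = _
    rw [hψsa x hx, Complex.ofReal_re, hgx]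
    rfl

end PositiveFunctional

theorem stmt_1_general {A M : Type*} [NonUnitalCStarAlgebra A]
    [NonUnitalCStarAlgebra M] [PartialOrder M] [StarOrderedRing M]
    (E : Submodule ℂ A) {n : ℕ} (e : Matrix (Fin n) (Fin n) A ≃⋆ₐ[ℂ] M)
    (X : M) (hXE : X ∈ matrixLevel E e) (hX : IsSelfAdjoint X) :
    Metric.infDist X {Y : M | Y ∈ matrixLevel E e ∧ 0 ≤ Y} ≤ 1 ↔
      ∀ φ : (matrixLevel E e) →L[ℂ] ℂ, IsPositiveFunctional (matrixLevel E e) φ → ‖φ‖ ≤ 1 →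
        -1 ≤ (φ ⟨X, hXE⟩).re := by
  refine ⟨fun h φ hφ hφ₁ ↦ ?_, fun h ↦ ?_⟩
  · linarith [hφ.neg_infDist_le_re hφ₁ hXE]
  · by_contra! hlt
    obtain ⟨φ, hφ, hφ₁, hφX⟩ :=
      exists_isPositiveFunctional_re_eq_neg_infDist _ hXE hX (one_pos.trans hlt)
    linarith [h φ hφ hφ₁]

/-- Let `E` be a selfadjoint subspace of a C*-algebra `A`, let `n ∈ ℕ` and let
`X ∈ Mₙ(E)` be selfadjoint. Then `dist(X, Mₙ(E)₊) ≤ 1` iff `Re (φ X) ≥ -1` for every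
contractive positive functional `φ` on `Mₙ(E)`. -/
theorem stmt_1 {A M : Type*} [NonUnitalCStarAlgebra A] [PartialOrder A] [StarOrderedRing A]
    [NonUnitalCStarAlgebra M] [PartialOrder M] [StarOrderedRing M]
    (E : Submodule ℂ A) (hEclosed : IsClosed (E : Set A)) (hEstar : ∀ x ∈ E, star x ∈ E)
    {n : ℕ} (e : Matrix (Fin n) (Fin n) A ≃⋆ₐ[ℂ] M)
    (X : M) (hXE : X ∈ matrixLevel E e) (hX : IsSelfAdjoint X) :
    Metric.infDist X {Y : M | Y ∈ matrixLevel E e ∧ 0 ≤ Y} ≤ 1 ↔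
      ∀ φ : (matrixLevel E e) →L[ℂ] ℂ, IsPositiveFunctional (matrixLevel E e) φ → ‖φ‖ ≤ 1 →
        -1 ≤ (φ ⟨X, hXE⟩).re :=
  stmt_1_general E e X hXE hX
end
end

section
/- Let A be a C*-algebra, E ⊆ A a selfadjoint subspace, n ∈ ℕ, and X ∈ Mₙ(E) selfadjoint. Then Metric.infDist X Mₙ(E)₊ = sSup { −Re(φ X) : φ a contractive positive functional on Mₙ(E) }. (The set on the right is nonempty, as it contains 0 coming from the zero functional, and is bounded above by ‖X‖.) -/
open scoped ComplexOrder

noncomputable section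

/-!
Weak duality is one line: for a contractive positive functional `φ` and `Y ∈ S₊`,
`-Re φ(X) ≤ Re φ(Y - X) ≤ ‖Y - X‖`.

For the converse, `S₊` is a convex cone in `M` viewed as a real normed space. Separating it from
the open ball of radius `d = dist(X, S₊)` around `X` (Hahn–Banach) gives a real functional which
is nonnegative on the cone, since it is bounded below there, and which after rescaling has norm
`≤ 1` and value `-d` at `X`. Its complexification, averaged with `x ↦ conj (φ (star x))`, is
hermitian, still contractive, and agrees with the real functional on selfadjoint elements such as
`X` and the elements of `S₊`.
-/

open Metric

namespace PointedCone

variable {E : Type*} [NormedAddCommGroup E] [NormedSpace ℝ E]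

lemma apply_nonneg_of_forall_le {C : PointedCone ℝ E} {f : StrongDual ℝ E} {u : ℝ}
    (hu : ∀ y ∈ C, u ≤ f y) {y : E} (hy : y ∈ C) : 0 ≤ f y := by
  by_contra! hfy
  have hu0 : u ≤ 0 := by simpa using hu 0 C.zero_mem
  have h := hu _ (C.smul_mem (div_nonneg_of_nonpos (a := u - 1) (by linarith) hfy.le) hy)
  rw [map_smul, smul_eq_mul, div_mul_cancel₀ _ hfy.ne] at h
  linarith

theorem exists_dual_eq_neg_infDist (C : PointedCone ℝ E) (x : E) :
    ∃ f : StrongDual ℝ E, ‖f‖ ≤ 1 ∧ (∀ y ∈ C, 0 ≤ f y) ∧ f x = -infDist x (C : Set E) := by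
  rcases (infDist_nonneg (x := x) (s := (C : Set E))).eq_or_lt with hd | hd
  · exact ⟨0, by simp, by simp, by simp [← hd]⟩
  set d := infDist x (C : Set E)
  obtain ⟨f, u, hball, hC⟩ := geometric_hahn_banach_open (convex_ball x d) isOpen_ball C.convex
    disjoint_ball_infDist
  have hfC : ∀ y ∈ C, 0 ≤ f y := fun y hy => apply_nonneg_of_forall_le hC hy
  have hu : u ≤ 0 := by simpa using hC 0 C.zero_mem
  have hclosedBall : closedBall x d ⊆ {a | f a ≤ u} := by
    rw [← closure_ball x hd.ne']
    exact (isClosed_le f.continuous continuous_const).closure_subset_iff.2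
      fun a ha => (hball a ha).le
  have hfx : f x < 0 := (hball x (mem_ball_self hd)).trans_le hu
  have hnorm : ‖f‖ ≤ -f x / d := by
    refine f.opNorm_bound_of_ball_bound hd _ fun z hz => ?_
    have hadd : f (x + z) ≤ u := hclosedBall (by simpa using hz)
    have hsub : f (x - z) ≤ u := hclosedBall (by simpa using hz)
    rw [map_add] at hadd
    rw [map_sub] at hsub
    rw [Real.norm_eq_abs, abs_le]
    constructor <;> linarith
  have hscale : 0 < d / -f x := div_pos hd (neg_pos.2 hfx)
  refine ⟨(d / -f x) • f, ?_, fun y hy => smul_nonneg hscale.le (hfC y hy), ?_⟩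
  · rw [norm_smul, Real.norm_of_nonneg hscale.le, ← le_div_iff₀' (by positivity), one_div_div]
    exact hnorm
  · rw [smul_apply, smul_eq_mul, div_mul_eq_mul_div, div_neg, mul_div_assoc,
      div_self hfx.ne, mul_one]

end PointedCone

namespace StrongDual

variable {M : Type*} [NormedAddCommGroup M] [NormedSpace ℂ M] [StarAddMonoid M] [StarModule ℂ M]
  [NormedStarGroup M]

def hermitianPart (φ : StrongDual ℂ M) : StrongDual ℂ M :=
  (2⁻¹ : ℂ) • (φ + ((starL ℂ : ℂ ≃L⋆[ℂ] ℂ) : ℂ →L⋆[ℂ] ℂ).comp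
    (φ.comp ((starL ℂ : M ≃L⋆[ℂ] M) : M →L⋆[ℂ] M)))

lemma hermitianPart_apply (φ : StrongDual ℂ M) (x : M) :
    hermitianPart φ x = 2⁻¹ * (φ x + starRingEnd ℂ (φ (star x))) :=
  rfl

lemma hermitianPart_apply_star (φ : StrongDual ℂ M) (x : M) :
    hermitianPart φ (star x) = starRingEnd ℂ (hermitianPart φ x) := by
  simp only [hermitianPart_apply, star_star, map_mul, map_add, Complex.conj_conj, map_inv₀,
    map_ofNat]
  ring

lemma hermitianPart_apply_of_isSelfAdjoint (φ : StrongDual ℂ M) {x : M} (hx : IsSelfAdjoint x) :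
    hermitianPart φ x = (φ x).re := by
  rw [hermitianPart_apply, hx.star_eq, Complex.add_conj]
  push_cast
  ring

lemma norm_hermitianPart_le (φ : StrongDual ℂ M) : ‖hermitianPart φ‖ ≤ ‖φ‖ := by
  refine ContinuousLinearMap.opNorm_le_bound _ (norm_nonneg _) fun x => ?_
  rw [hermitianPart_apply, norm_mul, norm_inv, Complex.norm_ofNat]
  calc 2⁻¹ * ‖φ x + starRingEnd ℂ (φ (star x))‖
      ≤ 2⁻¹ * (‖φ‖ * ‖x‖ + ‖φ‖ * ‖star x‖) := by
        gcongr
        refine (norm_add_le _ _).trans (add_le_add (φ.le_opNorm x) ?_)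
        rw [Complex.norm_conj]
        exact φ.le_opNorm _
    _ = ‖φ‖ * ‖x‖ := by rw [norm_star]; ring

end StrongDual

section CStarAlgebra

variable {M : Type*} [NonUnitalCStarAlgebra M] [PartialOrder M]

lemma IsPositiveFunctional.neg_re_le_infDist {S : Submodule ℂ M} {φ : S →L[ℂ] ℂ}
    (hφ : IsPositiveFunctional S φ) (hφ1 : ‖φ‖ ≤ 1) {X : M} (hXS : X ∈ S) :
    -(φ ⟨X, hXS⟩).re ≤ infDist X {Y : M | Y ∈ S ∧ 0 ≤ Y} := by
  have hne : Set.Nonempty {Y : M | Y ∈ S ∧ 0 ≤ Y} := ⟨0, S.zero_mem, le_rfl⟩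
  refine (le_infDist hne).2 fun Y ⟨hYS, hY⟩ => ?_
  have hφY : 0 ≤ (φ ⟨Y, hYS⟩).re := (Complex.le_def.mp (hφ.2 Y hYS hY)).1
  calc -(φ ⟨X, hXS⟩).re ≤ (φ (⟨Y, hYS⟩ - ⟨X, hXS⟩)).re := by
        rw [map_sub, Complex.sub_re]; linarith
    _ ≤ ‖φ‖ * ‖(⟨Y, hYS⟩ - ⟨X, hXS⟩ : S)‖ := (Complex.re_le_norm _).trans (φ.le_opNorm _)
    _ ≤ dist X Y := by
        rw [dist_comm, dist_eq_norm]
        exact mul_le_of_le_one_left (norm_nonneg _) hφ1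

lemma exists_isPositiveFunctional_infDist_eq [StarOrderedRing M] (S : Submodule ℂ M) {X : M}
    (hXS : X ∈ S) (hX : IsSelfAdjoint X) : ∃ φ : S →L[ℂ] ℂ, IsPositiveFunctional S φ ∧ ‖φ‖ ≤ 1 ∧
      infDist X {Y : M | Y ∈ S ∧ 0 ≤ Y} = -(φ ⟨X, hXS⟩).re := by
  obtain ⟨f, hf1, hfC, hfX⟩ := PointedCone.exists_dual_eq_neg_infDist
    ((S.restrictScalars ℝ : PointedCone ℝ M) ⊓ PointedCone.positive ℝ M) X
  set ψ : StrongDual ℂ M := StrongDual.hermitianPart (StrongDual.extendRCLike f)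
  have hψ : ∀ x, IsSelfAdjoint x → ψ x = f x := fun x hx => by
    rw [StrongDual.hermitianPart_apply_of_isSelfAdjoint _ hx]
    exact_mod_cast StrongDual.re_extendRCLike_apply (𝕜 := ℂ) f x
  refine ⟨ψ.comp S.subtypeL, ⟨fun x _ _ => StrongDual.hermitianPart_apply_star _ x,
    fun x hxS hx => ?_⟩, ?_, ?_⟩
  · show 0 ≤ ψ x
    rw [hψ x hx.isSelfAdjoint]
    exact Complex.zero_le_real.mpr (hfC x ⟨hxS, hx⟩)
  · calc ‖ψ.comp S.subtypeL‖ ≤ ‖ψ‖ * ‖S.subtypeL‖ := ψ.opNorm_comp_le _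
      _ ≤ ‖f‖ * 1 := by
        gcongr
        · exact (StrongDual.norm_hermitianPart_le _).trans (StrongDual.norm_extendRCLike f).le
        · exact Submodule.norm_subtypeL_le S
      _ ≤ 1 := by simpa using hf1
  · show _ = -(ψ X).re
    rw [hψ X hX, Complex.ofReal_re, hfX, neg_neg]
    rfl

end CStarAlgebra

theorem stmt_2_general {A M : Type*} [NonUnitalCStarAlgebra A]
    [NonUnitalCStarAlgebra M] [PartialOrder M] [StarOrderedRing M]
    (E : Submodule ℂ A)
    {n : ℕ} (e : Matrix (Fin n) (Fin n) A ≃⋆ₐ[ℂ] M)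
    (X : M) (hXE : X ∈ matrixLevel E e) (hX : IsSelfAdjoint X) :
    Metric.infDist X {Y : M | Y ∈ matrixLevel E e ∧ 0 ≤ Y} =
      sSup {r : ℝ | ∃ φ : (matrixLevel E e) →L[ℂ] ℂ,
        IsPositiveFunctional (matrixLevel E e) φ ∧ ‖φ‖ ≤ 1 ∧ r = -(φ ⟨X, hXE⟩).re} := by
  obtain ⟨φ, hφ, hφ1, hdist⟩ := exists_isPositiveFunctional_infDist_eq _ hXE hX
  symm
  refine IsGreatest.csSup_eq ⟨⟨φ, hφ, hφ1, hdist⟩, ?_⟩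
  rintro r ⟨ψ, hψ, hψ1, rfl⟩
  exact hψ.neg_re_le_infDist hψ1 hXE

/-- Let `E` be a selfadjoint subspace of a C*-algebra `A`, let `n ∈ ℕ` and let
`X ∈ Mₙ(E)` be selfadjoint. Then the distance of `X` to `Mₙ(E)₊` is the supremum of
`-Re (φ X)` over all contractive positive functionals `φ` on `Mₙ(E)`. -/
theorem stmt_2 {A M : Type*} [NonUnitalCStarAlgebra A] [PartialOrder A] [StarOrderedRing A]
    [NonUnitalCStarAlgebra M] [PartialOrder M] [StarOrderedRing M]
    (E : Submodule ℂ A) (hEclosed : IsClosed (E : Set A)) (hEstar : ∀ x ∈ E, star x ∈ E)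
    {n : ℕ} (e : Matrix (Fin n) (Fin n) A ≃⋆ₐ[ℂ] M)
    (X : M) (hXE : X ∈ matrixLevel E e) (hX : IsSelfAdjoint X) :
    Metric.infDist X {Y : M | Y ∈ matrixLevel E e ∧ 0 ≤ Y} =
      sSup {r : ℝ | ∃ φ : (matrixLevel E e) →L[ℂ] ℂ,
        IsPositiveFunctional (matrixLevel E e) φ ∧ ‖φ‖ ≤ 1 ∧ r = -(φ ⟨X, hXE⟩).re} :=
  stmt_2_general E e X hXE hX
end
end

section
/- Let A be a unital C*-algebra and let S ⊆ T ⊆ A be selfadjoint subspaces of A with 1 ∈ S. Then for every selfadjoint x ∈ S, Metric.infDist x S₊ = Metric.infDist x T₊, where S₊ = {y ∈ S : 0 ≤ y in A} and T₊ = {y ∈ T : 0 ≤ y in A}. (This is the gauge maximality of unital inclusions of operator systems; applying it to Mₙ(S) ⊆ Mₙ(T) inside Mₙ(A) yields the statement at every matrix level.) -/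
/-!
If `y ≥ 0` and `x` is selfadjoint, then `x - y ≥ -‖x - y‖`, so `x + ‖x - y‖ • 1 ≥ y ≥ 0`.
When `1 ∈ S` and `x ∈ S`, this element is a positive element of `S` at distance at most
`‖x - y‖` from `x`. Hence every positive `y ∈ T` is matched by a positive element of `S`
that is no farther from `x`, and the two distances agree.
-/

lemma IsSelfAdjoint.nonneg_add_algebraMap_norm_sub {A : Type*} [CStarAlgebra A] [PartialOrder A]
    [StarOrderedRing A] {x y : A} (hx : IsSelfAdjoint x) (hy : 0 ≤ y) :
    0 ≤ x + algebraMap ℝ A ‖x - y‖ := by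
  have hxy : 0 ≤ x - y + algebraMap ℝ A ‖x - y‖ :=
    neg_le_iff_add_nonneg.mp (hx.sub hy.isSelfAdjoint).neg_algebraMap_norm_le_self
  calc (0 : A) ≤ y + (x - y + algebraMap ℝ A ‖x - y‖) := add_nonneg hy hxy
    _ = x + algebraMap ℝ A ‖x - y‖ := by abel

lemma CStarAlgebra.norm_algebraMap_real_le {A : Type*} [CStarAlgebra A] {r : ℝ} (hr : 0 ≤ r) :
    ‖algebraMap ℝ A r‖ ≤ r := by
  rcases subsingleton_or_nontrivial A with _ | _
  · simpa [Subsingleton.elim (algebraMap ℝ A r) 0] using hr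
  · rw [norm_algebraMap', Real.norm_of_nonneg hr]

lemma Submodule.algebraMap_real_mem {A : Type*} [CStarAlgebra A] {S : Submodule ℂ A}
    (hone : (1 : A) ∈ S) (r : ℝ) : algebraMap ℝ A r ∈ S := by
  rw [Algebra.algebraMap_eq_smul_one]
  exact S.smul_of_tower_mem r hone

lemma Submodule.infDist_nonneg_le_norm_sub_of_one_mem {A : Type*} [CStarAlgebra A]
    [PartialOrder A] [StarOrderedRing A] {S : Submodule ℂ A} (hone : (1 : A) ∈ S) {x y : A}
    (hxS : x ∈ S) (hx : IsSelfAdjoint x) (hy : 0 ≤ y) :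
    Metric.infDist x {z : A | z ∈ S ∧ 0 ≤ z} ≤ ‖x - y‖ := by
  have hmem : x + algebraMap ℝ A ‖x - y‖ ∈ {z : A | z ∈ S ∧ 0 ≤ z} :=
    ⟨S.add_mem hxS (Submodule.algebraMap_real_mem hone _),
      hx.nonneg_add_algebraMap_norm_sub hy⟩
  calc Metric.infDist x {z : A | z ∈ S ∧ 0 ≤ z}
      ≤ dist x (x + algebraMap ℝ A ‖x - y‖) := Metric.infDist_le_dist_of_mem hmem
    _ = ‖algebraMap ℝ A ‖x - y‖‖ := by rw [dist_eq_norm, sub_add_cancel_left, norm_neg]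
    _ ≤ ‖x - y‖ := CStarAlgebra.norm_algebraMap_real_le (norm_nonneg _)

theorem stmt_4_general {A : Type*} [CStarAlgebra A] [PartialOrder A] [StarOrderedRing A]
    (S T : Submodule ℂ A) (hST : S ≤ T)
    (hone : (1 : A) ∈ S)
    (x : A) (hxS : x ∈ S) (hx : IsSelfAdjoint x) :
    Metric.infDist x {y : A | y ∈ S ∧ 0 ≤ y} = Metric.infDist x {y : A | y ∈ T ∧ 0 ≤ y} := by
  have hSpos : ({y : A | y ∈ S ∧ 0 ≤ y} : Set A).Nonempty := ⟨0, S.zero_mem, le_rfl⟩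
  have hTpos : ({y : A | y ∈ T ∧ 0 ≤ y} : Set A).Nonempty := ⟨0, T.zero_mem, le_rfl⟩
  refine le_antisymm ?_
    (Metric.infDist_le_infDist_of_subset (fun y hy ↦ ⟨hST hy.1, hy.2⟩) hSpos)
  refine (Metric.le_infDist hTpos).mpr fun y hy ↦ ?_
  rw [dist_eq_norm]
  exact Submodule.infDist_nonneg_le_norm_sub_of_one_mem hone hxS hx hy.2

/-- In a unital C*-algebra `A`, if `S ⊆ T` are closed selfadjoint subspaces
with `1 ∈ S`, then for every selfadjoint `x ∈ S` the distance of `x` to the positive cone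
of `S` equals the distance of `x` to the positive cone of `T` (gauge maximality of unital
inclusions of operator systems). -/
theorem stmt_4 {A : Type*} [CStarAlgebra A] [PartialOrder A] [StarOrderedRing A]
    (S T : Submodule ℂ A) (hST : S ≤ T)
    (hSclosed : IsClosed (S : Set A)) (hTclosed : IsClosed (T : Set A))
    (hSstar : ∀ x ∈ S, star x ∈ S) (hTstar : ∀ x ∈ T, star x ∈ T)
    (hone : (1 : A) ∈ S)
    (x : A) (hxS : x ∈ S) (hx : IsSelfAdjoint x) :
    Metric.infDist x {y : A | y ∈ S ∧ 0 ≤ y} = Metric.infDist x {y : A | y ∈ T ∧ 0 ≤ y} :=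
  stmt_4_general S T hST hone x hxS hx
end

section
/- Let A be a C*-algebra and let E ⊆ A be a selfadjoint subspace that generates A (the smallest closed star-subalgebra of A containing E is A). Then the following are equivalent: (1) E is separating for A, i.e., every positive functional ψ on A with ψ|_E = 0 satisfies ψ = 0; (2) for every n ∈ ℕ, Mₙ(E) is separating for Mₙ(A), i.e., every positive functional Ψ on Mₙ(A) vanishing on Mₙ(E) satisfies Ψ = 0. -/
/-! For a positive functional `Ψ` on `Mₙ(A)` and `u ∈ ℂⁿ`, the functional `a ↦ Ψ (u u* ⊗ a)`
on `A` is positive, because `u u* ⊗ s* s = R* R` with `R = w u* ⊗ s` for a unit vector `w`, and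
it vanishes on `E`; so it is zero when `E` is separating. By polarization `Ψ` then vanishes on
every `u v* ⊗ a`, in particular on the matrix units `eᵢⱼ ⊗ a`, which span `Mₙ(A)`. Conversely
`M₁(A) ≅ A` as C*-algebras. Positive functionals on C*-algebras are automatically bounded, so
continuity never has to be checked. -/

open scoped ComplexOrder

noncomputable section

/-- The `n`-th matrix level `Mₙ(E)` of a subspace `E` of a C*-algebra `A`, realized inside a
C*-algebra `M` given together with a ⋆-algebra isomorphism `e : Mₙ(A) ≃⋆ₐ[ℂ] M`. -/
def matrixLevelSet {A M : Type*} [NonUnitalCStarAlgebra A] [NonUnitalCStarAlgebra M] {n : ℕ}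
    (E : Submodule ℂ A) (e : Matrix (Fin n) (Fin n) A ≃⋆ₐ[ℂ] M) : Set M :=
  {X : M | ∀ i j, e.symm X i j ∈ E}

lemma LinearMap.eq_zero_of_forall_apply_self_eq_zero {V : Type*} [AddCommGroup V] [Module ℂ V]
    (B : V →ₗ[ℂ] V →ₗ⋆[ℂ] ℂ) (h : ∀ x, B x x = 0) : B = 0 := by
  ext x y
  have h₁ := h (x + y)
  have h₂ := h (x + Complex.I • y)
  simp only [map_add, map_smul, map_smulₛₗ, LinearMap.add_apply, LinearMap.smul_apply, h x, h y,
    smul_eq_mul, Complex.conj_I] at h₁ h₂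
  simp only [LinearMap.zero_apply]
  linear_combination (Complex.I / 2) * (h₂ - Complex.I * h₁) + B x y * Complex.I_sq

namespace Matrix

variable {ι A : Type*}

section Module
variable [AddCommMonoid A] [Module ℂ A]

def rankOneSMul : (ι → ℂ) →ₗ[ℂ] (ι → ℂ) →ₗ⋆[ℂ] A →ₗ[ℂ] Matrix ι ι A :=
  LinearMap.mk₂'ₛₗ (RingHom.id ℂ) (starRingEnd ℂ)
    (fun u v =>
      { toFun := fun a => of fun i j => (u i * star (v j)) • a
        map_add' := fun a b => by ext; simp [smul_add]
        map_smul' := fun c a => by ext; simp [smul_comm c] })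
    (fun u u' v => by ext; simp [add_mul, add_smul])
    (fun c u v => by ext; simp [mul_assoc, mul_smul])
    (fun u v v' => by ext; simp [mul_add, add_smul])
    (fun c u v => by ext; simp [mul_smul]; exact smul_comm _ _ _)

lemma rankOneSMul_apply (u v : ι → ℂ) (a : A) (i j : ι) :
    rankOneSMul u v a i j = (u i * star (v j)) • a := rfl

lemma rankOneSMul_single [DecidableEq ι] (i j : ι) (a : A) :
    rankOneSMul (Pi.single i 1) (Pi.single j 1) a = single i j a := by
  ext k l
  simp only [rankOneSMul_apply, single_apply, Pi.single_apply]
  split_ifs <;> simp_all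

end Module

section Ring
variable [NonUnitalNonAssocSemiring A] [StarRing A] [Module ℂ A] [StarModule ℂ A]

lemma star_rankOneSMul (u v : ι → ℂ) (a : A) :
    star (rankOneSMul u v a) = rankOneSMul v u (star a) := by
  ext i j
  simp [star_apply, rankOneSMul_apply, star_smul, mul_comm]

end Ring

lemma rankOneSMul_mul_rankOneSMul [Fintype ι] [NonUnitalNonAssocSemiring A] [Module ℂ A]
    [IsScalarTower ℂ A A] [SMulCommClass ℂ A A] (u v u' v' : ι → ℂ) (a b : A) :
    rankOneSMul u v a * rankOneSMul u' v' b = (star v ⬝ᵥ u') • rankOneSMul u v' (a * b) := by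
  ext i j
  simp only [mul_apply, rankOneSMul_apply, smul_mul_smul_comm, smul_apply, smul_smul,
    ← Finset.sum_smul, dotProduct, Finset.sum_mul, Pi.star_apply]
  congr 1
  refine Finset.sum_congr rfl fun k _ => by ring

lemma exists_rankOneSMul_self_eq_star_mul_self [Fintype ι] [DecidableEq ι]
    [NonUnitalNonAssocSemiring A] [StarRing A] [Module ℂ A] [StarModule ℂ A]
    [IsScalarTower ℂ A A] [SMulCommClass ℂ A A] (u : ι → ℂ) (s : A) :
    ∃ R : Matrix ι ι A, rankOneSMul u u (star s * s) = star R * R := by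
  cases isEmpty_or_nonempty ι
  · exact ⟨0, Subsingleton.elim _ _⟩
  · let w : ι → ℂ := Pi.single (Classical.arbitrary ι) 1
    refine ⟨rankOneSMul w u s, ?_⟩
    rw [star_rankOneSMul, rankOneSMul_mul_rankOneSMul]
    simp [w]

end Matrix

open Matrix

lemma map_rankOneSMul_self_nonneg {ι A M F : Type*} [Fintype ι] [DecidableEq ι]
    [NonUnitalCStarAlgebra A] [PartialOrder A] [StarOrderedRing A]
    [NonUnitalSemiring M] [StarRing M] [PartialOrder M] [StarOrderedRing M]
    [FunLike F (Matrix ι ι A) M] [MulHomClass F (Matrix ι ι A) M] [StarHomClass F (Matrix ι ι A) M]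
    (f : F) (u : ι → ℂ) {a : A} (ha : 0 ≤ a) : 0 ≤ f (rankOneSMul u u a) := by
  obtain ⟨s, rfl⟩ := CStarAlgebra.nonneg_iff_eq_star_mul_self.mp ha
  obtain ⟨R, hR⟩ := exists_rankOneSMul_self_eq_star_mul_self u s
  rw [hR, map_mul, map_star]
  exact star_mul_self_nonneg _

def IsSeparating {B : Type*} [NonUnitalCStarAlgebra B] [PartialOrder B] (S : Set B) : Prop :=
  ∀ ψ : B →L[ℂ] ℂ, (∀ b, 0 ≤ b → 0 ≤ ψ b) → (∀ x ∈ S, ψ x = 0) → ψ = 0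

namespace IsSeparating

variable {A M : Type*} [NonUnitalCStarAlgebra A] [PartialOrder A] [StarOrderedRing A]
  [NonUnitalCStarAlgebra M] [PartialOrder M] [StarOrderedRing M]

lemma apply_eq_zero {S : Set A} (hS : IsSeparating S) (φ : A →ₗ[ℂ] ℂ)
    (hφ_nonneg : ∀ a, 0 ≤ a → 0 ≤ φ a) (hφ : ∀ x ∈ S, φ x = 0) (a : A) : φ a = 0 := by
  let φ' : A →ₚ[ℂ] ℂ := .mk₀ φ hφ_nonneg
  exact congr($(hS ⟨φ', map_continuous φ'⟩ hφ_nonneg hφ) a)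

lemma matrixLevelSet {n : ℕ} {E : Submodule ℂ A} (hE : IsSeparating (E : Set A))
    (e : Matrix (Fin n) (Fin n) A ≃⋆ₐ[ℂ] M) : IsSeparating (_root_.matrixLevelSet E e) := by
  intro Ψ hΨ hvan
  have hdiag (u : Fin n → ℂ) (a : A) : Ψ (e (rankOneSMul u u a)) = 0 :=
    hE.apply_eq_zero ((Ψ : M →ₗ[ℂ] ℂ) ∘ₗ (e : Matrix (Fin n) (Fin n) A →ₗ[ℂ] M) ∘ₗ rankOneSMul u u)
      (fun b hb => hΨ _ (map_rankOneSMul_self_nonneg e u hb))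
      (fun x hx => hvan _ fun i j => by simpa [rankOneSMul_apply] using E.smul_mem _ hx) a
  have hall (u v : Fin n → ℂ) (a : A) : Ψ (e (rankOneSMul u v a)) = 0 := by
    let B : (Fin n → ℂ) →ₗ[ℂ] (Fin n → ℂ) →ₗ⋆[ℂ] ℂ :=
      LinearMap.mk₂'ₛₗ (RingHom.id ℂ) (starRingEnd ℂ) (fun u v => Ψ (e (rankOneSMul u v a)))
        (by simp) (by simp) (by simp) (by simp)
    exact congr($(B.eq_zero_of_forall_apply_self_eq_zero fun u => hdiag u a) u v)
  ext X
  rw [← e.apply_symm_apply X, matrix_eq_sum_single (e.symm X)]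
  simp [map_sum, ← rankOneSMul_single, hall]

lemma of_matrixLevelSet {E : Submodule ℂ A} (e : Matrix (Fin 1) (Fin 1) A ≃⋆ₐ[ℂ] M)
    (h : IsSeparating (_root_.matrixLevelSet E e)) : IsSeparating (E : Set A) := by
  intro ψ hψ hvan
  let f : A ≃⋆ₐ[ℂ] M := (CStarMatrix.toOneByOne (Fin 1) ℂ A).trans e
  have := h.apply_eq_zero ((ψ : A →ₗ[ℂ] ℂ) ∘ₗ (f.symm : M →ₗ[ℂ] A))
    (fun X hX => hψ _ (map_nonneg f.symm hX)) (fun X hX => hvan _ (hX 0 0))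
  ext a
  simpa using this (f a)

end IsSeparating

theorem stmt_6_general {A : Type*} [NonUnitalCStarAlgebra A] [PartialOrder A] [StarOrderedRing A]
    (E : Submodule ℂ A)
    (M : ℕ → Type*) [∀ n, NonUnitalCStarAlgebra (M n)] [∀ n, PartialOrder (M n)]
    [∀ n, StarOrderedRing (M n)]
    (e : ∀ n, Matrix (Fin n) (Fin n) A ≃⋆ₐ[ℂ] M n) :
    (∀ ψ : A →L[ℂ] ℂ, (∀ a : A, 0 ≤ a → 0 ≤ ψ a) → (∀ x ∈ E, ψ x = 0) → ψ = 0) ↔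
      (∀ (n : ℕ) (Ψ : M n →L[ℂ] ℂ), (∀ X : M n, 0 ≤ X → 0 ≤ Ψ X) →
        (∀ X ∈ matrixLevelSet E (e n), Ψ X = 0) → Ψ = 0) :=
  ⟨fun hE n => IsSeparating.matrixLevelSet hE (e n),
    fun h => IsSeparating.of_matrixLevelSet (e 1) (h 1)⟩

/-- Let `E` be a selfadjoint subspace generating the C*-algebra `A`.
Then `E` is separating for `A` if and only if `Mₙ(E)` is separating for `Mₙ(A)` for
every `n`. -/
theorem stmt_6 {A : Type*} [NonUnitalCStarAlgebra A] [PartialOrder A] [StarOrderedRing A]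
    (E : Submodule ℂ A) (hEclosed : IsClosed (E : Set A)) (hEstar : ∀ x ∈ E, star x ∈ E)
    (hgen : (NonUnitalStarAlgebra.adjoin ℂ (E : Set A)).topologicalClosure = ⊤)
    (M : ℕ → Type*) [∀ n, NonUnitalCStarAlgebra (M n)] [∀ n, PartialOrder (M n)]
    [∀ n, StarOrderedRing (M n)]
    (e : ∀ n, Matrix (Fin n) (Fin n) A ≃⋆ₐ[ℂ] M n) :
    (∀ ψ : A →L[ℂ] ℂ, (∀ a : A, 0 ≤ a → 0 ≤ ψ a) → (∀ x ∈ E, ψ x = 0) → ψ = 0) ↔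
      (∀ (n : ℕ) (Ψ : M n →L[ℂ] ℂ), (∀ X : M n, 0 ≤ X → 0 ≤ Ψ X) →
        (∀ X ∈ matrixLevelSet E (e n), Ψ X = 0) → Ψ = 0) :=
  stmt_6_general E M e
end
end

section
/- Let A be a unital C*-algebra and let E ⊆ A be a selfadjoint subspace that generates A and is separating for A (every positive functional on A vanishing on E is zero). Then the set 𝔎 := { φ : E → ℂ continuous linear | there exists a positive functional ψ on A with ψ|_E = φ } is closed in the weak-* topology of the continuous dual of E (the topology of pointwise convergence on E). (This is the scalar-valued case, K = ℂ, of the closedness of the set of extendable completely bounded completely positive maps in the point-weak-* topology.) -/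
/-!
Separation yields a strictly positive element `e ≥ ε • 1` in `E`: otherwise the open convex set
`A₊ + ball 1 1` misses `E`, and Hahn–Banach produces a nonzero positive functional vanishing on `E`.
For positive `ψ` one has `‖ψ‖ ≤ 4 ‖ψ 1‖ ≤ 4 ‖ψ e‖ / ε`, so positive functionals with `‖ψ e‖ ≤ R`
form a weak-* compact set by Banach–Alaoglu. Hence the set of extendable functionals meets each
set `{φ | ‖φ e‖ ≤ R}` in a compact, hence closed, set, and is therefore closed.
-/

open scoped ComplexOrder ComplexStarModule Pointwise

namespace WeakDual

variable {𝕜 V : Type*} [CommSemiring 𝕜] [TopologicalSpace 𝕜] [ContinuousAdd 𝕜]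
  [ContinuousConstSMul 𝕜 𝕜] [AddCommMonoid V] [Module 𝕜 V] [TopologicalSpace V]

noncomputable def restrict (E : Submodule 𝕜 V) (ψ : WeakDual 𝕜 V) : WeakDual 𝕜 E :=
  StrongDual.toWeakDual ((toStrongDual ψ).comp E.subtypeL)

lemma continuous_restrict (E : Submodule 𝕜 V) : Continuous (restrict E) :=
  continuous_of_continuous_eval fun x ↦ eval_continuous (x : V)

lemma isClosed_setOf_forall_nonneg [PartialOrder 𝕜] [OrderClosedTopology 𝕜] [LE V] :
    IsClosed {ψ : WeakDual 𝕜 V | ∀ a, 0 ≤ a → 0 ≤ ψ a} := by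
  simp only [Set.ofPred_forall]
  exact isClosed_iInter fun a ↦ isClosed_iInter fun _ ↦
    isClosed_le continuous_const (eval_continuous a)

end WeakDual

lemma isClosed_of_forall_isClosed_inter_preimage_Iic {X : Type*} [TopologicalSpace X]
    {S : Set X} {f : X → ℝ} (hf : Continuous f) (h : ∀ R, IsClosed (S ∩ f ⁻¹' Set.Iic R)) :
    IsClosed S := by
  refine isClosed_of_closure_subset fun x hx ↦ ?_
  have hxU : x ∈ closure (f ⁻¹' Set.Iio (f x + 1) ∩ S) :=
    (isOpen_Iio.preimage hf).inter_closure ⟨lt_add_one (f x), hx⟩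
  have h_sub : f ⁻¹' Set.Iio (f x + 1) ∩ S ⊆ S ∩ f ⁻¹' Set.Iic (f x + 1) := by
    rw [Set.inter_comm]
    exact Set.inter_subset_inter_right S (Set.preimage_mono Set.Iio_subset_Iic_self)
  exact ((h _).closure_eq ▸ closure_mono h_sub hxU).1

lemma StrongDual.extendRCLike_apply_of_isSelfAdjoint {F : Type*} [TopologicalSpace F]
    [AddCommGroup F] [Module ℂ F] [ContinuousConstSMul ℂ F] [Module ℝ F] [IsScalarTower ℝ ℂ F]
    [StarAddMonoid F] [StarModule ℂ F] (g : StrongDual ℝ F) (hg : ∀ a, g (star a) = g a)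
    {h : F} (hh : IsSelfAdjoint h) : (StrongDual.extendRCLike g : StrongDual ℂ F) h = g h := by
  have h_skew : g (Complex.I • h) = 0 := by
    have := hg (Complex.I • h)
    rw [star_smul, hh.star_eq, Complex.star_def, Complex.conj_I, neg_smul, map_neg] at this
    linarith
  simp [StrongDual.extendRCLike_apply, h_skew]

section CStarAlgebra

variable {A : Type*} [CStarAlgebra A] [PartialOrder A] [StarOrderedRing A]

lemma norm_le_four_mul_norm_apply_one (ψ : A →L[ℂ] ℂ) (hψ : ∀ a, 0 ≤ a → 0 ≤ ψ a) :
    ‖ψ‖ ≤ 4 * ‖ψ 1‖ := by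
  refine ψ.opNorm_le_bound (by positivity) fun a ↦ ?_
  obtain ⟨y, hy_nonneg, hy_norm, hy⟩ := CStarAlgebra.exists_sum_four_nonneg a
  have hy_apply (i : Fin 4) : ‖ψ (y i)‖ ≤ ‖ψ 1‖ * ‖a‖ :=
    ((PositiveLinearMap.mk₀ ψ.toLinearMap hψ).norm_apply_le_of_nonneg _ (hy_nonneg i)).trans
      (mul_le_mul_of_nonneg_left (hy_norm i) (norm_nonneg _))
  calc ‖ψ a‖ ≤ ∑ i : Fin 4, ‖ψ (y i)‖ := by
        rw [hy, map_sum]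
        refine (norm_sum_le _ _).trans_eq ?_
        simp
    _ ≤ ∑ _i : Fin 4, ‖ψ 1‖ * ‖a‖ := Finset.sum_le_sum fun i _ ↦ hy_apply i
    _ = 4 * ‖ψ 1‖ * ‖a‖ := by simp [mul_assoc]

lemma norm_apply_one_le_of_algebraMap_le (ψ : A →L[ℂ] ℂ) (hψ : ∀ a, 0 ≤ a → 0 ≤ ψ a)
    {e : A} {ε : ℝ} (hε : 0 < ε) (he : algebraMap ℝ A ε ≤ e) : ‖ψ 1‖ ≤ ‖ψ e‖ / ε := by
  have h_apply : ψ (algebraMap ℝ A ε) = (ε : ℂ) * ψ 1 := by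
    rw [Algebra.algebraMap_eq_smul_one, ← algebraMap_smul ℂ ε (1 : A), map_smul,
      smul_eq_mul, Complex.coe_algebraMap]
  have h_le : (ε : ℂ) * ψ 1 ≤ ψ e := by
    simpa [h_apply] using hψ _ (sub_nonneg.mpr he)
  have h_nonneg : 0 ≤ (ε : ℂ) * ψ 1 :=
    mul_nonneg (by exact_mod_cast hε.le) (hψ 1 zero_le_one)
  rw [le_div_iff₀ hε, mul_comm]
  simpa [abs_of_pos hε] using CStarAlgebra.norm_le_norm_of_nonneg_of_le h_nonneg h_le

lemma algebraMap_one_sub_norm_sub_one_le_realPart (b : A) :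
    algebraMap ℝ A (1 - ‖b - 1‖) ≤ ℜ b := by
  have h_norm : ‖(ℜ (1 - b) : A)‖ ≤ ‖b - 1‖ := by
    simpa [norm_sub_rev] using realPart.norm_le (1 - b)
  have h_le := (ℜ (1 - b)).2.le_algebraMap_norm_self.trans (algebraMap_mono A h_norm)
  rw [map_sub, AddSubgroupClass.coe_sub, realPart_one] at h_le
  rw [map_sub, map_one]
  simpa [add_comm] using h_le

lemma disjoint_nonneg_add_ball_one (E : Submodule ℂ A) (hEstar : ∀ x ∈ E, star x ∈ E)
    (hE : ∀ e ∈ E, ∀ ε : ℝ, 0 < ε → ¬ algebraMap ℝ A ε ≤ e) :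
    Disjoint (Set.Ici 0 + Metric.ball (1 : A) 1) (E : Set A) := by
  rw [Set.disjoint_left]
  rintro _ ⟨p, hp, b, hb, rfl⟩ hx
  rw [Metric.mem_ball, dist_eq_norm] at hb
  have h_re : (ℜ (p + b) : A) ∈ E := by
    rw [realPart_apply_coe]
    exact E.smul_of_tower_mem _ (E.add_mem hx (hEstar _ hx))
  refine hE _ h_re (1 - ‖b - 1‖) (by linarith) ?_
  rw [map_add, AddMemClass.coe_add, (IsSelfAdjoint.of_nonneg hp).coe_realPart]
  exact le_add_of_nonneg_of_le hp (algebraMap_one_sub_norm_sub_one_le_realPart b)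

lemma exists_nonneg_realCLM_of_disjoint (E : Submodule ℂ A)
    (hdisj : Disjoint (Set.Ici 0 + Metric.ball (1 : A) 1) (E : Set A)) :
    ∃ g : A →L[ℝ] ℝ, (∀ a, 0 ≤ a → 0 ≤ g a) ∧ (∀ x ∈ E, g x = 0) ∧ 0 < g 1 := by
  obtain ⟨f, u, hf_s, hf_E⟩ := geometric_hahn_banach_open
    ((convex_Ici 0).add (convex_ball 1 1)) Metric.isOpen_ball.add_left
    (E.restrictScalars ℝ).convex hdisj
  have hu : u ≤ 0 := by simpa using hf_E 0 E.zero_mem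
  have hfE (x : A) (hx : x ∈ E) : f x = 0 := by
    by_contra hne
    have := hf_E (((u - 1) / f x) • x) (E.smul_of_tower_mem _ hx)
    rw [map_smul, smul_eq_mul, div_mul_cancel₀ _ hne] at this
    linarith
  have h_add_one_mem {p : A} (hp : 0 ≤ p) : p + 1 ∈ Set.Ici 0 + Metric.ball (1 : A) 1 :=
    ⟨p, hp, 1, Metric.mem_ball_self one_pos, rfl⟩
  have hf_one : f 1 < 0 := (hf_s 1 (by simpa using h_add_one_mem le_rfl)).trans_le hu
  have hf_nonpos (p : A) (hp : 0 ≤ p) : f p ≤ 0 := by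
    by_contra! hfp
    have ht : 0 ≤ -f 1 / f p := div_nonneg (neg_nonneg.mpr hf_one.le) hfp.le
    have := hf_s _ (h_add_one_mem (smul_nonneg ht hp))
    rw [map_add, map_smul, smul_eq_mul, div_mul_cancel₀ _ hfp.ne'] at this
    linarith
  exact ⟨-f, fun p hp ↦ by simpa using hf_nonpos p hp, fun x hx ↦ by simp [hfE x hx],
    by simpa using hf_one⟩

lemma exists_nonneg_complexCLM_of_realCLM (E : Submodule ℂ A) (hEstar : ∀ x ∈ E, star x ∈ E)
    (g : A →L[ℝ] ℝ) (hg : ∀ a, 0 ≤ a → 0 ≤ g a) (hgE : ∀ x ∈ E, g x = 0) :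
    ∃ ψ : A →L[ℂ] ℂ, (∀ a, 0 ≤ a → 0 ≤ ψ a) ∧ (∀ x ∈ E, ψ x = 0) ∧ ψ 1 = g 1 := by
  -- Symmetrizing makes `g'` vanish on skew-adjoint elements, so `extendRCLike g'` is real on
  -- self-adjoint ones.
  set g' : A →L[ℝ] ℝ := (2⁻¹ : ℝ) • (g + g.comp (starL' ℝ : A ≃L[ℝ] A).toContinuousLinearMap)
  have hg' (a : A) : g' a = 2⁻¹ * (g a + g (star a)) := rfl
  have hg'_star (a : A) : g' (star a) = g' a := by simp [hg', add_comm]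
  have hg'_sa {h : A} (hh : IsSelfAdjoint h) : g' h = g h := by simp [hg', hh.star_eq]; ring
  refine ⟨StrongDual.extendRCLike g', fun a ha ↦ ?_, fun x hx ↦ ?_, ?_⟩
  · rw [StrongDual.extendRCLike_apply_of_isSelfAdjoint g' hg'_star (.of_nonneg ha),
      hg'_sa (.of_nonneg ha)]
    exact_mod_cast hg a ha
  · have hE' {y : A} (hy : y ∈ E) : g' y = 0 := by simp [hg', hgE y hy, hgE _ (hEstar y hy)]
    simp [StrongDual.extendRCLike_apply, hE' hx, hE' (E.smul_mem Complex.I hx)]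
  · rw [StrongDual.extendRCLike_apply_of_isSelfAdjoint g' hg'_star (.one A), hg'_sa (.one A)]

lemma exists_mem_algebraMap_le_of_separating (E : Submodule ℂ A) (hEstar : ∀ x ∈ E, star x ∈ E)
    (hsep : ∀ ψ : A →L[ℂ] ℂ, (∀ a : A, 0 ≤ a → 0 ≤ ψ a) → (∀ x ∈ E, ψ x = 0) → ψ = 0) :
    ∃ e ∈ E, ∃ ε : ℝ, 0 < ε ∧ algebraMap ℝ A ε ≤ e := by
  by_contra! hE
  obtain ⟨g, hg, hgE, hg_one⟩ :=
    exists_nonneg_realCLM_of_disjoint E (disjoint_nonneg_add_ball_one E hEstar hE)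
  obtain ⟨ψ, hψ, hψE, hψ_one⟩ := exists_nonneg_complexCLM_of_realCLM E hEstar g hg hgE
  have h_one : ψ 1 = 0 := by simp [hsep ψ hψ hψE]
  rw [hψ_one] at h_one
  exact hg_one.ne' (by exact_mod_cast h_one)

lemma isCompact_setOf_nonneg_norm_apply_le {e : A} {ε : ℝ} (hε : 0 < ε)
    (he : algebraMap ℝ A ε ≤ e) (R : ℝ) :
    IsCompact {ψ : WeakDual ℂ A | (∀ a, 0 ≤ a → 0 ≤ ψ a) ∧ ‖ψ e‖ ≤ R} := by
  refine WeakDual.isCompact_of_bounded_of_closed ?_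
    (WeakDual.isClosed_setOf_forall_nonneg.inter
      (isClosed_le (WeakDual.eval_continuous e).norm continuous_const))
  refine (WeakDual.isBounded_closedBall 0 (4 * (R / ε))).subset fun ψ ⟨hψ, hψe⟩ ↦ ?_
  rw [Set.mem_preimage, mem_closedBall_zero_iff]
  calc ‖WeakDual.toStrongDual ψ‖ ≤ 4 * ‖ψ 1‖ := norm_le_four_mul_norm_apply_one ψ hψ
    _ ≤ 4 * (R / ε) := by
      gcongr
      exact (norm_apply_one_le_of_algebraMap_le ψ hψ hε he).trans
        (div_le_div_of_nonneg_right hψe hε.le)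

end CStarAlgebra

theorem stmt_8_general {A : Type*} [CStarAlgebra A] [PartialOrder A] [StarOrderedRing A]
    (E : Submodule ℂ A) (hEstar : ∀ x ∈ E, star x ∈ E)
    (hsep : ∀ ψ : A →L[ℂ] ℂ, (∀ a : A, 0 ≤ a → 0 ≤ ψ a) → (∀ x ∈ E, ψ x = 0) → ψ = 0) :
    IsClosed {φ : WeakDual ℂ E | ∃ ψ : A →L[ℂ] ℂ,
      (∀ a : A, 0 ≤ a → 0 ≤ ψ a) ∧ ∀ (x : A) (hx : x ∈ E), ψ x = φ ⟨x, hx⟩} := by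
  obtain ⟨e, he, ε, hε, hεe⟩ := exists_mem_algebraMap_le_of_separating E hEstar hsep
  have h_image : {φ : WeakDual ℂ E | ∃ ψ : A →L[ℂ] ℂ,
      (∀ a : A, 0 ≤ a → 0 ≤ ψ a) ∧ ∀ (x : A) (hx : x ∈ E), ψ x = φ ⟨x, hx⟩} =
      WeakDual.restrict E '' {ψ | ∀ a, 0 ≤ a → 0 ≤ ψ a} := by
    ext φ
    constructor
    · rintro ⟨ψ, hψ, hψφ⟩
      exact ⟨StrongDual.toWeakDual ψ, hψ, DFunLike.ext _ _ fun ⟨x, hx⟩ ↦ hψφ x hx⟩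
    · rintro ⟨ψ, hψ, rfl⟩
      exact ⟨WeakDual.toStrongDual ψ, hψ, fun x hx ↦ rfl⟩
  rw [h_image]
  refine isClosed_of_forall_isClosed_inter_preimage_Iic
    (WeakDual.eval_continuous ⟨e, he⟩).norm fun R ↦ ?_
  rw [← Set.image_inter_preimage]
  exact ((isCompact_setOf_nonneg_norm_apply_le hε hεe R).image
    (WeakDual.continuous_restrict E)).isClosed

/-- **Lemma 4.3, scalar case.** Let `A` be a unital C*-algebra and `E ⊆ A` a
selfadjoint subspace generating `A` and separating for `A`.  Then the set of functionals on
`E` that extend to positive functionals on `A` is weak-* closed in the dual of `E`. -/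
theorem stmt_8 {A : Type*} [CStarAlgebra A] [PartialOrder A] [StarOrderedRing A]
    (E : Submodule ℂ A) (hEclosed : IsClosed (E : Set A)) (hEstar : ∀ x ∈ E, star x ∈ E)
    (hgen : (NonUnitalStarAlgebra.adjoin ℂ (E : Set A)).topologicalClosure = ⊤)
    (hsep : ∀ ψ : A →L[ℂ] ℂ, (∀ a : A, 0 ≤ a → 0 ≤ ψ a) → (∀ x ∈ E, ψ x = 0) → ψ = 0) :
    IsClosed {φ : WeakDual ℂ E | ∃ ψ : A →L[ℂ] ℂ,
      (∀ a : A, 0 ≤ a → 0 ≤ ψ a) ∧ ∀ (x : A) (hx : x ∈ E), ψ x = φ ⟨x, hx⟩} :=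
  stmt_8_general E hEstar hsep
end

section
/- Let H be a complex Hilbert space, E ⊆ B(H) a selfadjoint subspace, and φ a contractive positive functional on E satisfying ‖φ‖ = sSup { Re(φ x) : x ∈ E₊, ‖x‖ ≤ 1 }. Then: (a) every continuous ℂ-linear functional ψ : B(H) → ℂ with ψ(star a) = conj(ψ a) for all a ∈ B(H), ψ|_E = φ, and ‖ψ‖ = ‖φ‖ is automatically a positive functional on B(H); and consequently (b) φ extends to a positive functional on B(H) of the same norm. -/
open scoped ComplexOrder

/-!
For positive contractions `x` and `b` one has `‖x - b‖ ≤ 1`, hence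
`Re ψ x - Re ψ b ≤ ‖ψ‖`; choosing `x` with `Re ψ x` close to `‖ψ‖` forces `Re ψ b ≥ 0`, and
selfadjointness of `ψ` makes `ψ b` real. For the existence part, a Hahn–Banach extension `ψ` of
`φ` is replaced by its hermitian part `(ψ + conj ∘ ψ ∘ star) / 2`, which still extends `φ` and has
no larger norm.
-/

noncomputable section

section CStarAlgebra

variable {A : Type*} [CStarAlgebra A] [PartialOrder A] [StarOrderedRing A]

lemma IsSelfAdjoint.norm_le_of_neg_le_of_le {a : A} (ha : IsSelfAdjoint a) {r : ℝ} (hr : 0 ≤ r)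
    (hlow : -algebraMap ℝ A r ≤ a) (hup : a ≤ algebraMap ℝ A r) : ‖a‖ ≤ r := by
  rcases subsingleton_or_nontrivial A with _ | _
  · simpa [Subsingleton.elim a 0] using hr
  rw [← map_neg] at hlow
  rcases CStarAlgebra.norm_or_neg_norm_mem_spectrum ha with hmem | hmem
  · exact (le_algebraMap_iff_spectrum_le ha).mp hup _ hmem
  · linarith [(algebraMap_le_iff_le_spectrum ha).mp hlow _ hmem]

lemma norm_sub_le_of_nonneg_of_norm_le {x y : A} {r : ℝ} (hr : 0 ≤ r) (hx : 0 ≤ x) (hy : 0 ≤ y)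
    (hxr : ‖x‖ ≤ r) (hyr : ‖y‖ ≤ r) : ‖x - y‖ ≤ r := by
  rw [CStarAlgebra.norm_le_iff_le_algebraMap x hr] at hxr
  rw [CStarAlgebra.norm_le_iff_le_algebraMap y hr] at hyr
  refine (IsSelfAdjoint.of_nonneg hx).sub (.of_nonneg hy) |>.norm_le_of_neg_le_of_le hr ?_ ?_
  · calc -algebraMap ℝ A r ≤ -y := neg_le_neg hyr
      _ ≤ x - y := by simpa using sub_le_sub_right hx y
  · exact (sub_le_self x hy).trans hxr

theorem nonneg_apply_of_forall_exists_re_apply_gt (ψ : A →L[ℂ] ℂ)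
    (hψ : ∀ a, ψ (star a) = starRingEnd ℂ (ψ a))
    (hnorm : ∀ ε > 0, ∃ x : A, 0 ≤ x ∧ ‖x‖ ≤ 1 ∧ ‖ψ‖ - ε < (ψ x).re)
    {a : A} (ha : 0 ≤ a) : 0 ≤ ψ a := by
  have re_nonneg : ∀ b : A, 0 ≤ b → ‖b‖ ≤ 1 → 0 ≤ (ψ b).re := by
    intro b hb hb1
    by_contra! hneg
    obtain ⟨x, hx, hx1, hlt⟩ := hnorm (-(ψ b).re) (by linarith)
    -- since `‖x - b‖ ≤ 1`, `Re ψ x - Re ψ b = Re ψ (x - b) ≤ ‖ψ‖`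
    have : (ψ (x - b)).re ≤ ‖ψ‖ :=
      calc (ψ (x - b)).re ≤ ‖ψ (x - b)‖ := Complex.re_le_norm _
        _ ≤ ‖ψ‖ * ‖x - b‖ := ψ.le_opNorm _
        _ ≤ ‖ψ‖ := mul_le_of_le_one_right (norm_nonneg ψ)
              (norm_sub_le_of_nonneg_of_norm_le zero_le_one hx hb hx1 hb1)
    rw [map_sub, Complex.sub_re] at this
    linarith
  have im_eq : (ψ a).im = 0 := by
    have := hψ a
    rw [(IsSelfAdjoint.of_nonneg ha).star_eq] at this
    exact Complex.conj_eq_iff_im.mp this.symm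
  refine Complex.nonneg_iff.mpr ⟨?_, im_eq.symm⟩
  rcases eq_or_ne a 0 with rfl | hne
  · simp
  have hpos : 0 < ‖a‖ := norm_pos_iff.mpr hne
  have hscale : a = ‖a‖ • (‖a‖⁻¹ • a) := by rw [smul_smul, mul_inv_cancel₀ hpos.ne', one_smul]
  rw [hscale, ψ.map_smul_of_tower, Complex.smul_re, smul_eq_mul]
  refine mul_nonneg hpos.le (re_nonneg _ (smul_nonneg (inv_nonneg.mpr hpos.le) ha) ?_)
  rw [norm_smul, Real.norm_of_nonneg (inv_nonneg.mpr hpos.le), inv_mul_cancel₀ hpos.ne']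

end CStarAlgebra

section HermitianPart

variable {A : Type*} [NormedAddCommGroup A] [NormedSpace ℂ A] [StarAddMonoid A]
  [StarModule ℂ A] [NormedStarGroup A]

def conjStar (ψ : A →L[ℂ] ℂ) : A →L[ℂ] ℂ :=
  ((starL ℂ : ℂ ≃L⋆[ℂ] ℂ) : ℂ →SL[starRingEnd ℂ] ℂ).comp
    (ψ.comp ((starL ℂ : A ≃L⋆[ℂ] A) : A →SL[starRingEnd ℂ] A))

def hermitianPart (ψ : A →L[ℂ] ℂ) : A →L[ℂ] ℂ := (2⁻¹ : ℂ) • (ψ + conjStar ψ)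

lemma hermitianPart_apply (ψ : A →L[ℂ] ℂ) (a : A) :
    hermitianPart ψ a = 2⁻¹ * (ψ a + starRingEnd ℂ (ψ (star a))) := rfl

lemma hermitianPart_star (ψ : A →L[ℂ] ℂ) (a : A) :
    hermitianPart ψ (star a) = starRingEnd ℂ (hermitianPart ψ a) := by
  simp only [hermitianPart_apply, star_star, map_mul, map_add, Complex.conj_conj, map_inv₀,
    map_ofNat]
  ring

lemma hermitianPart_apply_eq {ψ : A →L[ℂ] ℂ} {a : A} (ha : ψ (star a) = starRingEnd ℂ (ψ a)) :
    hermitianPart ψ a = ψ a := by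
  rw [hermitianPart_apply, ha, Complex.conj_conj]
  ring

lemma norm_hermitianPart_le (ψ : A →L[ℂ] ℂ) : ‖hermitianPart ψ‖ ≤ ‖ψ‖ := by
  refine (hermitianPart ψ).opNorm_le_bound (norm_nonneg ψ) fun a ↦ ?_
  calc ‖hermitianPart ψ a‖ = 2⁻¹ * ‖ψ a + starRingEnd ℂ (ψ (star a))‖ := by
        rw [hermitianPart_apply, norm_mul]; norm_num
    _ ≤ 2⁻¹ * (‖ψ‖ * ‖a‖ + ‖ψ‖ * ‖star a‖) := by
        gcongr
        refine (norm_add_le _ _).trans (add_le_add (ψ.le_opNorm a) ?_)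
        rw [RCLike.norm_conj]
        exact ψ.le_opNorm _
    _ = ‖ψ‖ * ‖a‖ := by rw [norm_star]; ring

theorem exists_extension_norm_eq_of_star (E : Submodule ℂ A) (hE : ∀ x ∈ E, star x ∈ E)
    (φ : E →L[ℂ] ℂ)
    (hφ : ∀ (x : A) (hx : x ∈ E) (hsx : star x ∈ E),
      φ ⟨star x, hsx⟩ = starRingEnd ℂ (φ ⟨x, hx⟩)) :
    ∃ ψ : A →L[ℂ] ℂ, (∀ a, ψ (star a) = starRingEnd ℂ (ψ a)) ∧
      (∀ (x : A) (hx : x ∈ E), ψ x = φ ⟨x, hx⟩) ∧ ‖ψ‖ = ‖φ‖ := by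
  obtain ⟨ψ₀, hext, hnorm⟩ := exists_extension_norm_eq E φ
  have hextends : ∀ (x : A) (hx : x ∈ E), hermitianPart ψ₀ x = φ ⟨x, hx⟩ := by
    intro x hx
    rw [hermitianPart_apply_eq (by rw [hext ⟨star x, hE x hx⟩, hext ⟨x, hx⟩, hφ])]
    exact hext ⟨x, hx⟩
  refine ⟨hermitianPart ψ₀, hermitianPart_star ψ₀, hextends, ?_⟩
  refine le_antisymm (hnorm ▸ norm_hermitianPart_le ψ₀) ?_
  refine φ.opNorm_le_bound (norm_nonneg _) fun x ↦ ?_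
  rw [← hextends x x.2]
  exact (hermitianPart ψ₀).le_opNorm x

end HermitianPart

theorem stmt_11_general {H : Type*} [NormedAddCommGroup H] [InnerProductSpace ℂ H] [CompleteSpace H]
    (E : Submodule ℂ (H →L[ℂ] H))
    (hEstar : ∀ x ∈ E, star x ∈ E)
    (φ : E →L[ℂ] ℂ)
    (hstar : ∀ (x : H →L[ℂ] H) (hx : x ∈ E) (hsx : star x ∈ E),
      φ ⟨star x, hsx⟩ = starRingEnd ℂ (φ ⟨x, hx⟩))
    (hnorm : ‖φ‖ = sSup {r : ℝ | ∃ (x : H →L[ℂ] H) (hx : x ∈ E),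
      0 ≤ x ∧ ‖x‖ ≤ 1 ∧ r = (φ ⟨x, hx⟩).re}) :
    (∀ ψ : (H →L[ℂ] H) →L[ℂ] ℂ,
      (∀ a : H →L[ℂ] H, ψ (star a) = starRingEnd ℂ (ψ a)) →
      (∀ (x : H →L[ℂ] H) (hx : x ∈ E), ψ x = φ ⟨x, hx⟩) →
      ‖ψ‖ = ‖φ‖ →
      ∀ a : H →L[ℂ] H, 0 ≤ a → 0 ≤ ψ a) ∧
    (∃ ψ : (H →L[ℂ] H) →L[ℂ] ℂ,
      (∀ a : H →L[ℂ] H, 0 ≤ a → 0 ≤ ψ a) ∧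
      (∀ (x : H →L[ℂ] H) (hx : x ∈ E), ψ x = φ ⟨x, hx⟩) ∧
      ‖ψ‖ = ‖φ‖) := by
  have hφ : ∀ ε > 0, ∃ (x : H →L[ℂ] H) (hx : x ∈ E),
      0 ≤ x ∧ ‖x‖ ≤ 1 ∧ ‖φ‖ - ε < (φ ⟨x, hx⟩).re := by
    intro ε hε
    set S := {r : ℝ | ∃ (x : H →L[ℂ] H) (hx : x ∈ E), 0 ≤ x ∧ ‖x‖ ≤ 1 ∧ r = (φ ⟨x, hx⟩).re}
    obtain ⟨_, ⟨x, hx, hx0, hx1, rfl⟩, hlt⟩ :=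
      exists_lt_of_lt_csSup (s := S) ⟨0, 0, E.zero_mem, le_rfl, by simp, by rw [show (⟨0, E.zero_mem⟩ : E) = 0 from rfl, map_zero, Complex.zero_re]⟩
        (hnorm ▸ sub_lt_self ‖φ‖ hε)
    exact ⟨x, hx, hx0, hx1, hnorm ▸ hlt⟩
  have partA : ∀ ψ : (H →L[ℂ] H) →L[ℂ] ℂ,
      (∀ a : H →L[ℂ] H, ψ (star a) = starRingEnd ℂ (ψ a)) →
      (∀ (x : H →L[ℂ] H) (hx : x ∈ E), ψ x = φ ⟨x, hx⟩) →
      ‖ψ‖ = ‖φ‖ →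
      ∀ a : H →L[ℂ] H, 0 ≤ a → 0 ≤ ψ a := by
    refine fun ψ hψs hψE hψn a ha ↦ nonneg_apply_of_forall_exists_re_apply_gt ψ hψs ?_ ha
    intro ε hε
    obtain ⟨x, hx, hx0, hx1, hlt⟩ := hφ ε hε
    exact ⟨x, hx0, hx1, by rwa [hψn, hψE x hx]⟩
  obtain ⟨ψ, hψs, hψE, hψn⟩ := exists_extension_norm_eq_of_star E hEstar φ hstar
  exact ⟨partA, ψ, partA ψ hψs hψE hψn, hψE, hψn⟩

/-- **Lemma 4.13.** Let `E ⊆ B(H)` be a selfadjoint subspace and `φ` a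
contractive positive functional on `E` whose norm is the supremum of its (real) values on the
positive part of the unit ball of `E`.  Then (a) every selfadjoint Hahn–Banach extension of
`φ` to `B(H)` of the same norm is automatically positive, and (b) `φ` extends to a positive
functional on `B(H)` of the same norm. -/
theorem stmt_11 {H : Type*} [NormedAddCommGroup H] [InnerProductSpace ℂ H] [CompleteSpace H]
    (E : Submodule ℂ (H →L[ℂ] H)) (hEclosed : IsClosed (E : Set (H →L[ℂ] H)))
    (hEstar : ∀ x ∈ E, star x ∈ E)
    (φ : E →L[ℂ] ℂ)
    (hstar : ∀ (x : H →L[ℂ] H) (hx : x ∈ E) (hsx : star x ∈ E),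
      φ ⟨star x, hsx⟩ = starRingEnd ℂ (φ ⟨x, hx⟩))
    (hpos : ∀ (x : H →L[ℂ] H) (hx : x ∈ E), 0 ≤ x → 0 ≤ φ ⟨x, hx⟩)
    (hcontr : ‖φ‖ ≤ 1)
    (hnorm : ‖φ‖ = sSup {r : ℝ | ∃ (x : H →L[ℂ] H) (hx : x ∈ E),
      0 ≤ x ∧ ‖x‖ ≤ 1 ∧ r = (φ ⟨x, hx⟩).re}) :
    (∀ ψ : (H →L[ℂ] H) →L[ℂ] ℂ,
      (∀ a : H →L[ℂ] H, ψ (star a) = starRingEnd ℂ (ψ a)) →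
      (∀ (x : H →L[ℂ] H) (hx : x ∈ E), ψ x = φ ⟨x, hx⟩) →
      ‖ψ‖ = ‖φ‖ →
      ∀ a : H →L[ℂ] H, 0 ≤ a → 0 ≤ ψ a) ∧
    (∃ ψ : (H →L[ℂ] H) →L[ℂ] ℂ,
      (∀ a : H →L[ℂ] H, 0 ≤ a → 0 ≤ ψ a) ∧
      (∀ (x : H →L[ℂ] H) (hx : x ∈ E), ψ x = φ ⟨x, hx⟩) ∧
      ‖ψ‖ = ‖φ‖) :=
  stmt_11_general E hEstar φ hstar hnorm
end
end

section
/- Let A be a C*-algebra and let E ⊆ A be a selfadjoint subspace that is approximately 1-generated: {x ∈ E_sa : ‖x‖ ≤ 1} is contained in the closure of {p − q : p, q ∈ E₊, ‖p‖ ≤ 1, ‖q‖ ≤ 1}. Then every positive functional φ on E satisfies ‖φ‖ = sSup { Re(φ x) : x ∈ E₊, ‖x‖ ≤ 1 }; in other words, the norm of any positive functional is attained as the supremum of its (real) values on the positive part of the unit ball. -/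
/-!
Testing the norm of a functional on the unit ball reduces to testing its real part, since
each value `φ y` can be rotated onto the positive real axis by a unimodular scalar. For a
hermitian `φ`, `Re φ y = φ (Re y)` and `Re y` is a selfadjoint contraction of `E`; this is a
limit of differences `p - q` of positive contractions, where `Re φ (p - q) ≤ Re φ p` because
`φ q ≥ 0`, so continuity bounds `Re φ y` by the supremum over the positive unit ball.
-/

open scoped ComplexOrder

noncomputable section

theorem ContinuousLinearMap.opNorm_le_of_re_le {𝕜 F : Type*} [RCLike 𝕜] [SeminormedAddCommGroup F]
    [NormedSpace 𝕜 F] (f : F →L[𝕜] 𝕜) {M : ℝ} (h : ∀ x, ‖x‖ ≤ 1 → RCLike.re (f x) ≤ M) :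
    ‖f‖ ≤ M := by
  have hM : 0 ≤ M := by simpa using h 0 (by simp)
  refine f.opNorm_le_of_unit_norm hM fun x hx => ?_
  rcases eq_or_ne (f x) 0 with hfx | hfx
  · simpa [hfx] using hM
  set c : 𝕜 := (‖f x‖ : 𝕜) / f x
  have hc : ‖c‖ = 1 := by simp [c, norm_div, hfx]
  have hcx : ‖c • x‖ ≤ 1 := by rw [norm_smul, hc, hx, one_mul]
  simpa [c, div_mul_cancel₀ _ hfx] using h (c • x) hcx

section RealPart

variable {A : Type*} [AddCommGroup A] [Module ℂ A] [StarAddMonoid A] [StarModule ℂ A]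
  {E : Submodule ℂ A}

theorem Submodule.realPart_mem (hE : ∀ x ∈ E, star x ∈ E) {x : A} (hx : x ∈ E) :
    (realPart x : A) ∈ E := by
  rw [realPart_apply_coe]
  exact E.smul_of_tower_mem _ (E.add_mem hx (hE x hx))

theorem apply_realPart_eq_re {F : Type*} [FunLike F E ℂ] [LinearMapClass F ℂ E ℂ]
    (hE : ∀ x ∈ E, star x ∈ E) (φ : F)
    (hφ : ∀ (x : A) (hx : x ∈ E) (hsx : star x ∈ E),
      φ ⟨star x, hsx⟩ = starRingEnd ℂ (φ ⟨x, hx⟩))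
    {x : A} (hx : x ∈ E) :
    φ ⟨realPart x, E.realPart_mem hE hx⟩ = (φ ⟨x, hx⟩).re := by
  have : (⟨realPart x, E.realPart_mem hE hx⟩ : E) = (2⁻¹ : ℝ) • (⟨x, hx⟩ + ⟨star x, hE x hx⟩) :=
    Subtype.ext (realPart_apply_coe x)
  rw [this, LinearMapClass.map_smul_of_tower, map_add, hφ x hx, Complex.add_conj, Complex.real_smul]
  push_cast
  ring

end RealPart

theorem re_apply_le_of_mem_closure_sub {A : Type*} [NormedAddCommGroup A] [NormedSpace ℂ A]
    [PartialOrder A] {E : Submodule ℂ A} (φ : E →L[ℂ] ℂ)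
    (hpos : ∀ (x : A) (hx : x ∈ E), 0 ≤ x → 0 ≤ φ ⟨x, hx⟩) {M : ℝ}
    (hM : ∀ (p : A) (hp : p ∈ E), 0 ≤ p → ‖p‖ ≤ 1 → (φ ⟨p, hp⟩).re ≤ M)
    {z : A} (hz : z ∈ E)
    (hzc : z ∈ closure {y : A | ∃ p q : A, p ∈ E ∧ 0 ≤ p ∧ ‖p‖ ≤ 1 ∧ q ∈ E ∧ 0 ≤ q ∧ ‖q‖ ≤ 1 ∧
        y = p - q}) :
    (φ ⟨z, hz⟩).re ≤ M := by
  set D := {y : A | ∃ p q : A, p ∈ E ∧ 0 ≤ p ∧ ‖p‖ ≤ 1 ∧ q ∈ E ∧ 0 ≤ q ∧ ‖q‖ ≤ 1 ∧ y = p - q}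
  have hD : ((↑) : E → A) '' ((↑) ⁻¹' D) = D := by
    refine Set.image_preimage_eq_of_subset fun y hy => ?_
    obtain ⟨p, q, hp, -, -, hq, -, -, rfl⟩ := hy
    exact ⟨⟨p - q, E.sub_mem hp hq⟩, rfl⟩
  have hclosed : IsClosed {y : E | (φ y).re ≤ M} :=
    isClosed_le (Complex.continuous_re.comp φ.continuous) continuous_const
  refine closure_minimal (fun y hy => ?_) hclosed (closure_subtype.mpr (hD ▸ hzc))
  obtain ⟨p, q, hp, hp0, hp1, hq, hq0, -, hpq⟩ := hy
  have hy : y = ⟨p, hp⟩ - ⟨q, hq⟩ := Subtype.ext hpq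
  have hq_re : 0 ≤ (φ ⟨q, hq⟩).re := (Complex.le_def.mp (hpos q hq hq0)).1
  simp only [Set.mem_ofPred_eq, hy, map_sub, Complex.sub_re]
  linarith [hM p hp hp0 hp1]

theorem stmt_12_general {A : Type*} [NonUnitalCStarAlgebra A] [PartialOrder A] [StarOrderedRing A]
    (E : Submodule ℂ A) (hEstar : ∀ x ∈ E, star x ∈ E)
    (h1gen : {x : A | x ∈ E ∧ star x = x ∧ ‖x‖ ≤ 1} ⊆
      closure {y : A | ∃ p q : A, p ∈ E ∧ 0 ≤ p ∧ ‖p‖ ≤ 1 ∧ q ∈ E ∧ 0 ≤ q ∧ ‖q‖ ≤ 1 ∧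
        y = p - q})
    (φ : E →L[ℂ] ℂ)
    (hstar : ∀ (x : A) (hx : x ∈ E) (hsx : star x ∈ E),
      φ ⟨star x, hsx⟩ = starRingEnd ℂ (φ ⟨x, hx⟩))
    (hpos : ∀ (x : A) (hx : x ∈ E), 0 ≤ x → 0 ≤ φ ⟨x, hx⟩) :
    ‖φ‖ = sSup {r : ℝ | ∃ (x : A) (hx : x ∈ E), 0 ≤ x ∧ ‖x‖ ≤ 1 ∧ r = (φ ⟨x, hx⟩).re} := by
  set S := {r : ℝ | ∃ (x : A) (hx : x ∈ E), 0 ≤ x ∧ ‖x‖ ≤ 1 ∧ r = (φ ⟨x, hx⟩).re}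
  have hS : ∀ r ∈ S, r ≤ ‖φ‖ := by
    rintro r ⟨x, hx, -, hx1, rfl⟩
    calc (φ ⟨x, hx⟩).re ≤ ‖φ ⟨x, hx⟩‖ := Complex.re_le_norm _
      _ ≤ ‖φ‖ * 1 := φ.le_opNorm_of_le (x := ⟨x, hx⟩) hx1
      _ = ‖φ‖ := mul_one _
  refine le_antisymm (φ.opNorm_le_of_re_le fun y hy => ?_) (Real.sSup_le hS (norm_nonneg φ))
  obtain ⟨x, hx⟩ := y
  have hx_sa : (realPart x : A) ∈ {x : A | x ∈ E ∧ star x = x ∧ ‖x‖ ≤ 1} :=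
    ⟨E.realPart_mem hEstar hx, (realPart x).2.star_eq, (realPart.norm_le x).trans hy⟩
  calc (φ ⟨x, hx⟩).re = (φ ⟨realPart x, E.realPart_mem hEstar hx⟩).re := by
        rw [apply_realPart_eq_re hEstar φ hstar hx, Complex.ofReal_re]
    _ ≤ sSup S := re_apply_le_of_mem_closure_sub φ hpos
        (fun p hp hp0 hp1 => le_csSup ⟨‖φ‖, hS⟩ ⟨p, hp, hp0, hp1, rfl⟩) _ (h1gen hx_sa)

/-- Let `E` be a selfadjoint subspace of a C*-algebra `A` which is
approximately 1-generated: every selfadjoint contraction of `E` is a limit of differences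
`p - q` of positive contractions of `E`.  Then the norm of every positive functional `φ` on
`E` is the supremum of its (real) values on the positive part of the unit ball of `E`. -/
theorem stmt_12 {A : Type*} [NonUnitalCStarAlgebra A] [PartialOrder A] [StarOrderedRing A]
    (E : Submodule ℂ A) (hEclosed : IsClosed (E : Set A)) (hEstar : ∀ x ∈ E, star x ∈ E)
    (h1gen : {x : A | x ∈ E ∧ star x = x ∧ ‖x‖ ≤ 1} ⊆
      closure {y : A | ∃ p q : A, p ∈ E ∧ 0 ≤ p ∧ ‖p‖ ≤ 1 ∧ q ∈ E ∧ 0 ≤ q ∧ ‖q‖ ≤ 1 ∧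
        y = p - q})
    (φ : E →L[ℂ] ℂ)
    (hstar : ∀ (x : A) (hx : x ∈ E) (hsx : star x ∈ E),
      φ ⟨star x, hsx⟩ = starRingEnd ℂ (φ ⟨x, hx⟩))
    (hpos : ∀ (x : A) (hx : x ∈ E), 0 ≤ x → 0 ≤ φ ⟨x, hx⟩) :
    ‖φ‖ = sSup {r : ℝ | ∃ (x : A) (hx : x ∈ E), 0 ≤ x ∧ ‖x‖ ≤ 1 ∧ r = (φ ⟨x, hx⟩).re} :=
  stmt_12_general E hEstar h1gen φ hstar hpos
end
end

section
/- Let A be a C*-algebra, E ⊆ A a selfadjoint subspace, and (e_λ)_{λ∈Λ} a net indexed by a directed set Λ with: e_λ ∈ E₊ and ‖e_λ‖ ≤ 1 for all λ; e_λ ≤ e_μ whenever λ ≤ μ; and for every x ∈ E_sa and every ε > 0 there exist λ ∈ Λ and a real t < ‖x‖ + ε with −t·e_λ ≤ x ≤ t·e_λ. Let φ : E → ℂ be a continuous ℂ-linear map with φ(star x) = conj(φ x) for all x ∈ E. Then φ is positive (φ(p) is a nonnegative real for every p ∈ E₊) if and only if the net (Re(φ(e_λ)))_λ converges to ‖φ‖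 (convergence along the atTop filter of the directed set Λ). -/
open scoped ComplexOrder

noncomputable section

open scoped CStarAlgebra in
open Unitization in
lemma aux_norm_sub {A : Type*} [NonUnitalCStarAlgebra A] [PartialOrder A] [StarOrderedRing A]
    {a b : A} (ha : 0 ≤ a) (hb : 0 ≤ b) {r : ℝ} (hna : ‖a‖ ≤ r) (hnb : ‖b‖ ≤ r) :
    ‖a - b‖ ≤ r := by
  have hr : 0 ≤ r := le_trans (norm_nonneg a) hna
  have ha' : (0 : A⁺¹) ≤ a := inr_nonneg_iff.mpr ha
  have hb' : (0 : A⁺¹) ≤ b := inr_nonneg_iff.mpr hb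
  have h1 : (a : A⁺¹) ≤ algebraMap ℝ A⁺¹ r :=
    (CStarAlgebra.norm_le_iff_le_algebraMap _ hr ha').mp (by rwa [norm_inr])
  have h2 : (b : A⁺¹) ≤ algebraMap ℝ A⁺¹ r :=
    (CStarAlgebra.norm_le_iff_le_algebraMap _ hr hb').mp (by rwa [norm_inr])
  have hx : IsSelfAdjoint ((a : A⁺¹) - b) := (IsSelfAdjoint.of_nonneg ha').sub (.of_nonneg hb')
  have hub : (a : A⁺¹) - b ≤ algebraMap ℝ A⁺¹ r :=
    le_trans (by simpa using sub_le_sub_left hb' (a : A⁺¹)) h1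
  have hlb : algebraMap ℝ A⁺¹ (-r) ≤ (a : A⁺¹) - b := by
    rw [map_neg]
    exact le_trans (neg_le_neg h2) (by simpa using sub_le_sub_right ha' (b : A⁺¹))
  rw [le_algebraMap_iff_spectrum_le (ha := hx)] at hub
  rw [algebraMap_le_iff_le_spectrum (ha := hx)] at hlb
  have key : ‖(a : A⁺¹) - b‖ ≤ r := by
    rcases CStarAlgebra.norm_or_neg_norm_mem_spectrum hx with h | h
    · exact hub _ h
    · linarith [hlb _ h]
  rwa [← inr_sub ℂ a b, norm_inr] at key

/-- **Lemma 4.9.** Let `E` be a selfadjoint subspace of a C*-algebra `A` and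
let `(e_λ)` be a net in `E₊` which is contractive, increasing, and order-dominates every
selfadjoint element of `E` with constants arbitrarily close to its norm (as does a matrix
norm-defining approximate order unit).  A selfadjoint functional `φ` on `E` is positive if
and only if `Re (φ (e_λ)) → ‖φ‖`. -/
theorem stmt_14 {A : Type*} [NonUnitalCStarAlgebra A] [PartialOrder A] [StarOrderedRing A]
    (E : Submodule ℂ A) (hEclosed : IsClosed (E : Set A)) (hEstar : ∀ x ∈ E, star x ∈ E)
    {Λ : Type*} [Preorder Λ] [Nonempty Λ] [IsDirected Λ (· ≤ ·)]
    (u : Λ → A) (humem : ∀ l, u l ∈ E) (hupos : ∀ l, 0 ≤ u l) (hucontr : ∀ l, ‖u l‖ ≤ 1)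
    (humono : ∀ l m, l ≤ m → u l ≤ u m)
    (hdom : ∀ x ∈ E, star x = x → ∀ ε > 0, ∃ (l : Λ) (t : ℝ), t < ‖x‖ + ε ∧
      -(t • u l) ≤ x ∧ x ≤ t • u l)
    (φ : E →L[ℂ] ℂ)
    (hstar : ∀ (x : A) (hx : x ∈ E) (hsx : star x ∈ E),
      φ ⟨star x, hsx⟩ = starRingEnd ℂ (φ ⟨x, hx⟩)) :
    (∀ (x : A) (hx : x ∈ E), 0 ≤ x → 0 ≤ φ ⟨x, hx⟩) ↔
      Filter.Tendsto (fun l : Λ => (φ ⟨u l, humem l⟩).re) Filter.atTop (nhds ‖φ‖) := by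
  haveI : (Filter.atTop : Filter Λ).NeBot := Filter.atTop_neBot_iff.mpr ⟨‹_›, ‹_›⟩
  set f : Λ → ℝ := fun l => (φ ⟨u l, humem l⟩).re with hf
  -- φ is real on selfadjoint elements
  have hreal : ∀ (x : A) (hx : x ∈ E), star x = x → φ ⟨x, hx⟩ = ((φ ⟨x, hx⟩).re : ℂ) := by
    intro x hx hsx
    have hsx' : star x ∈ E := by rw [hsx]; exact hx
    have h := hstar x hx hsx'
    rw [show (⟨star x, hsx'⟩ : E) = ⟨x, hx⟩ from Subtype.ext hsx] at h
    have him : (φ ⟨x, hx⟩).im = 0 := Complex.conj_eq_iff_im.mp h.symm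
    exact (Complex.conj_eq_iff_re.mp h.symm).symm
  constructor
  · -- positivity implies convergence
    intro hpos
    have hf0 : ∀ l, 0 ≤ f l := by
      intro l
      have h := hpos (u l) (humem l) (hupos l)
      simpa using (Complex.le_def.mp h).1
    have hmono : Monotone f := by
      intro l m hlm
      have hmem : u m - u l ∈ E := E.sub_mem (humem m) (humem l)
      have h := hpos _ hmem (sub_nonneg.mpr (humono l m hlm))
      rw [show (⟨u m - u l, hmem⟩ : E) = ⟨u m, humem m⟩ - ⟨u l, humem l⟩ from rfl,
        map_sub] at h
      have := (Complex.le_def.mp h).1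
      simp only [Complex.zero_re, Complex.sub_re] at this
      simpa [hf] using by linarith
    have hbdd : ∀ l, f l ≤ ‖φ‖ := by
      intro l
      calc f l ≤ ‖φ ⟨u l, humem l⟩‖ := Complex.re_le_norm _
        _ = ‖φ ⟨u l, humem l⟩‖ := rfl
        _ ≤ ‖φ‖ * ‖(⟨u l, humem l⟩ : E)‖ := φ.le_opNorm _
        _ ≤ ‖φ‖ * 1 := by
            refine mul_le_mul_of_nonneg_left ?_ (norm_nonneg φ)
            simpa using hucontr l
        _ = ‖φ‖ := mul_one _
    have hbdd' : BddAbove (Set.range f) := ⟨‖φ‖, by rintro - ⟨l, rfl⟩; exact hbdd l⟩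
    set L := ⨆ l, f l with hLdef
    have htL : Filter.Tendsto f Filter.atTop (nhds L) := tendsto_atTop_ciSup hmono hbdd'
    have hL_le : L ≤ ‖φ‖ := ciSup_le hbdd
    have hL0 : 0 ≤ L :=
      le_trans (hf0 (Classical.arbitrary Λ)) (le_ciSup hbdd' (Classical.arbitrary Λ))
    -- the key estimate on selfadjoint elements, then all elements
    have hkey : ∀ (x : E) (ε : ℝ), 0 < ε → ‖φ x‖ ≤ L * (‖x‖ + ε) := by
      intro x ε hε
      by_cases hc : φ x = 0
      · rw [hc, norm_zero]
        have : (0:ℝ) ≤ ‖x‖ + ε := by positivity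
        positivity
      set c := φ x with hcdef
      have habs : (0:ℝ) < ‖c‖ := by
        simpa [norm_pos_iff] using hc
      set s : ℂ := (starRingEnd ℂ) c / (‖c‖ : ℂ) with hsdef
      have hs1 : ‖s‖ = 1 := by
        rw [hsdef, norm_div, Complex.norm_conj, Complex.norm_real, Real.norm_eq_abs,
          abs_of_pos habs, div_self habs.ne']
      set y : E := s • x with hydef
      have hφy : φ y = (‖c‖ : ℂ) := by
        rw [hydef, map_smul, smul_eq_mul, hsdef, ← hcdef]
        rw [div_mul_eq_mul_div, mul_comm, Complex.mul_conj]
        rw [Complex.normSq_eq_norm_sq]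
        push_cast
        field_simp
      have hsy_mem : star (y : A) ∈ E := hEstar _ y.2
      set a : E := (2⁻¹ : ℂ) • (y + ⟨star (y : A), hsy_mem⟩) with hadef
      have haval : (a : A) = (2⁻¹ : ℂ) • ((y : A) + star (y : A)) := rfl
      have hsa : star (a : A) = (a : A) := by
        rw [haval, star_smul, star_add, star_star]
        simp [add_comm]
      have hφa : φ a = (‖c‖ : ℂ) := by
        have h1 : φ ⟨star (y : A), hsy_mem⟩ = starRingEnd ℂ (φ y) := by
          have := hstar (y : A) y.2 hsy_mem
          simpa using this
        rw [hadef, map_smul, map_add, h1, hφy]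
        rw [Complex.conj_ofReal]
        ring_nf
      have hna : ‖(a : A)‖ ≤ ‖x‖ := by
        have hy_norm : ‖(y : A)‖ = ‖(x : A)‖ := by
          rw [hydef]
          show ‖s • (x : A)‖ = ‖(x : A)‖
          rw [norm_smul, hs1, one_mul]
        calc ‖(a : A)‖ = ‖(2⁻¹ : ℂ)‖ * ‖(y : A) + star (y : A)‖ := by rw [haval, norm_smul]
          _ ≤ 2⁻¹ * (‖(y : A)‖ + ‖star (y : A)‖) := by
              gcongr
              · norm_num
              · exact norm_add_le _ _
          _ = ‖(y : A)‖ := by rw [norm_star]; ring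
          _ = ‖x‖ := hy_norm
      obtain ⟨l, t, ht, -, h2⟩ := hdom (a : A) a.2 hsa ε hε
      -- t • u l - a is a nonnegative element of E
      have htsmul : (t : ℝ) • u l = ((t : ℂ)) • u l := (algebraMap_smul ℂ t (u l)).symm
      have hmem : (t : ℝ) • u l - (a : A) ∈ E := by
        rw [htsmul]
        exact E.sub_mem (E.smul_mem _ (humem l)) a.2
      have hp := hpos _ hmem (sub_nonneg.mpr h2)
      have heq : (⟨(t : ℝ) • u l - (a : A), hmem⟩ : E) =
          (t : ℂ) • (⟨u l, humem l⟩ : E) - a := by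
        ext
        show t • u l - (a : A) = (((t : ℂ) • (⟨u l, humem l⟩ : E) - a : E) : A)
        rw [htsmul]
        rfl
      rw [heq, map_sub, map_smul] at hp
      have hre := (Complex.le_def.mp hp).1
      rw [hφa] at hre
      simp only [Complex.zero_re, Complex.sub_re, Complex.smul_re, Complex.ofReal_re] at hre
      have hre' : ‖c‖ ≤ t * f l := by
        rw [smul_eq_mul, Complex.re_ofReal_mul] at hre
        show ‖c‖ ≤ t * (φ ⟨u l, humem l⟩).re
        linarith
      have hfl : f l ≤ L := le_ciSup hbdd' l
      have hfl0 : 0 ≤ f l := hf0 l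
      have hnormx : (0:ℝ) ≤ ‖x‖ := norm_nonneg _
      have hbound : t * f l ≤ L * (‖x‖ + ε) := by
        rcases le_or_gt 0 t with h0t | h0t
        · calc t * f l ≤ t * L := mul_le_mul_of_nonneg_left hfl h0t
            _ ≤ (‖(a : A)‖ + ε) * L := mul_le_mul_of_nonneg_right (le_of_lt ht) hL0
            _ ≤ (‖x‖ + ε) * L := by
                refine mul_le_mul_of_nonneg_right ?_ hL0
                have : ‖(a : A)‖ ≤ ‖x‖ := hna
                linarith
            _ = L * (‖x‖ + ε) := mul_comm _ _
        · have : t * f l ≤ 0 := mul_nonpos_of_nonpos_of_nonneg h0t.le hfl0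
          have h1 : (0:ℝ) ≤ L * (‖x‖ + ε) := by positivity
          linarith
      exact le_trans (le_of_eq rfl) (le_trans hre' hbound)
    have h_le_L : ‖φ‖ ≤ L := by
      refine φ.opNorm_le_bound hL0 fun x => ?_
      refine le_of_forall_pos_le_add fun ε hε => ?_
      rcases eq_or_lt_of_le hL0 with hL | hL
      · have := hkey x 1 one_pos
        rw [← hL] at this ⊢
        simpa using le_trans this (by linarith)
      · have := hkey x (ε / L) (div_pos hε hL)
        calc ‖φ x‖ ≤ L * (‖x‖ + ε / L) := this
          _ = L * ‖x‖ + ε := by field_simp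
    have : L = ‖φ‖ := le_antisymm hL_le h_le_L
    rw [← this]
    exact htL
  · -- convergence implies positivity
    intro htend x hx hxpos
    have hsx : star x = x := (IsSelfAdjoint.of_nonneg hxpos).star_eq
    rw [hreal x hx hsx]
    rw [Complex.zero_le_real]
    -- key inequality for each l
    have key : ∀ l, ‖x‖ * f l - ‖φ‖ * ‖x‖ ≤ (φ ⟨x, hx⟩).re := by
      intro l
      have hmemv : (‖x‖ : ℝ) • u l - x ∈ E := by
        rw [(algebraMap_smul ℂ (‖x‖) (u l)).symm]
        exact E.sub_mem (E.smul_mem _ (humem l)) hx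
      set v : E := ⟨(‖x‖ : ℝ) • u l - x, hmemv⟩ with hvdef
      have hvnorm : ‖v‖ ≤ ‖x‖ := by
        show ‖(‖x‖ : ℝ) • u l - x‖ ≤ ‖x‖
        refine aux_norm_sub (smul_nonneg (norm_nonneg x) (hupos l)) hxpos ?_ le_rfl
        calc ‖(‖x‖ : ℝ) • u l‖ = ‖x‖ * ‖u l‖ := by
              rw [norm_smul, Real.norm_eq_abs, abs_of_nonneg (norm_nonneg x)]
          _ ≤ ‖x‖ * 1 := mul_le_mul_of_nonneg_left (hucontr l) (norm_nonneg x)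
          _ = ‖x‖ := mul_one _
      have hveq : v = ((‖x‖ : ℂ)) • (⟨u l, humem l⟩ : E) - ⟨x, hx⟩ := by
        ext
        show (‖x‖ : ℝ) • u l - x = (((‖x‖ : ℂ) • (⟨u l, humem l⟩ : E) - ⟨x, hx⟩ : E) : A)
        rw [(algebraMap_smul ℂ (‖x‖) (u l)).symm]
        rfl
      have hφv : φ v = (‖x‖ : ℂ) * φ ⟨u l, humem l⟩ - φ ⟨x, hx⟩ := by
        rw [hveq, map_sub, map_smul, smul_eq_mul]
      have h1 : (φ v).re ≤ ‖φ‖ * ‖x‖ := by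
        calc (φ v).re ≤ ‖φ v‖ := Complex.re_le_norm _
          _ = ‖φ v‖ := rfl
          _ ≤ ‖φ‖ * ‖v‖ := φ.le_opNorm v
          _ ≤ ‖φ‖ * ‖x‖ := mul_le_mul_of_nonneg_left hvnorm (norm_nonneg φ)
      rw [hφv] at h1
      simp only [Complex.sub_re, Complex.re_ofReal_mul] at h1
      show ‖x‖ * (φ ⟨u l, humem l⟩).re - ‖φ‖ * ‖x‖ ≤ _
      linarith
    have hlim : Filter.Tendsto (fun l => ‖x‖ * f l - ‖φ‖ * ‖x‖) Filter.atTop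
        (nhds (‖x‖ * ‖φ‖ - ‖φ‖ * ‖x‖)) :=
      ((htend.const_mul ‖x‖).sub_const _)
    rw [show ‖x‖ * ‖φ‖ - ‖φ‖ * ‖x‖ = 0 by ring] at hlim
    exact le_of_tendsto hlim (Filter.Eventually.of_forall key)
end
end

section
/- Let A be a C*-algebra and let x ∈ A be selfadjoint with x₊ ≠ 0 and x₋ ≠ 0 (where x = x₊ − x₋ is the decomposition into positive and negative parts). Then for every n ∈ ℕ and every matrix a ∈ Matrix (Fin n) (Fin n) ℂ, if the matrix X with entries X i j = (a i j) • x is positive in Mₙ(A) (i.e., 0 ≤ X), then a = 0 (and hence X = 0). Equivalently, Mₙ(span{x}) ∩ Mₙ(A)₊ = {0} for all n; in particular, for c ∈ ℂ, 0 ≤ c • x implies c • x = 0. -/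
/-!
Compressing `c • x` by `xp` gives `c • xp³` and compressing by `xm` gives `-c • xm³`. Both are
positive when `c • x` is, and `xp³, xm³` are nonzero positive elements, so `c` is both `≥ 0` and
`≤ 0`. For matrices, each diagonal entry `a i i • x` of a positive `(a i j • x)` is positive, hence
zero, and a positive matrix over a C*-algebra with a zero diagonal entry has the whole row zero.
-/

open scoped ComplexOrder

section StarSquares

variable {R S F : Type*} [NonUnitalSemiring R] [StarRing R] [NonUnitalSemiring S] [StarRing S]
  [FunLike F R S] [NonUnitalRingHomClass F R S] [StarHomClass F R S]

theorem map_mem_closure_star_mul_self (f : F) {x : R}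
    (hx : x ∈ AddSubmonoid.closure (Set.range fun s : R => star s * s)) :
    f x ∈ AddSubmonoid.closure (Set.range fun s : S => star s * s) := by
  induction hx using AddSubmonoid.closure_induction with
  | mem _ h =>
    obtain ⟨s, rfl⟩ := h
    exact AddSubmonoid.subset_closure ⟨f s, by simp only [map_mul, map_star]⟩
  | zero => simp
  | add _ _ _ _ ha hb => simpa using AddSubmonoid.add_mem _ ha hb

end StarSquares

section CStarRing

variable {A : Type*} [NonUnitalNormedRing A] [StarRing A] [CStarRing A]

theorem IsSelfAdjoint.eq_zero_of_mul_self_mul_self_eq_zero {y : A} (hy : IsSelfAdjoint y)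
    (h : y * y * y = 0) : y = 0 := by
  have hyy : star (y * y) * (y * y) = 0 := by
    rw [star_mul, hy.star_eq, ← mul_assoc, h, zero_mul]
  rw [← CStarRing.star_mul_self_eq_zero_iff, hy.star_eq]
  exact (CStarRing.star_mul_self_eq_zero_iff _).mp hyy

variable [PartialOrder A] [StarOrderedRing A]

theorem Matrix.diag_nonneg_and_row_eq_zero_of_mem_closure {ι : Type*} [Fintype ι]
    {X : Matrix ι ι A}
    (hX : X ∈ AddSubmonoid.closure (Set.range fun s : Matrix ι ι A => star s * s)) (i : ι) :
    0 ≤ X i i ∧ (X i i = 0 → ∀ j, X i j = 0) := by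
  -- proved jointly: for a sum, the row claim needs both diagonal entries to be nonnegative
  induction hX using AddSubmonoid.closure_induction generalizing i with
  | mem _ h =>
    obtain ⟨Z, rfl⟩ := h
    beta_reduce
    have hentry : ∀ j, (star Z * Z) i j = ∑ k, star (Z k i) * Z k j := fun j => by
      simp [Matrix.mul_apply, Matrix.star_apply]
    have hterm : ∀ k ∈ Finset.univ, 0 ≤ star (Z k i) * Z k i := fun k _ => star_mul_self_nonneg _
    refine ⟨hentry i ▸ Finset.sum_nonneg hterm, fun h0 j => ?_⟩
    rw [hentry, Finset.sum_eq_zero_iff_of_nonneg hterm] at h0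
    have hcol : ∀ k, Z k i = 0 := fun k =>
      (CStarRing.star_mul_self_eq_zero_iff _).mp (h0 k (Finset.mem_univ k))
    simp [hentry, hcol]
  | zero => simp
  | add X Y _ _ hX hY =>
    refine ⟨add_nonneg (hX i).1 (hY i).1, fun h0 j => ?_⟩
    obtain ⟨hX0, hY0⟩ := (add_eq_zero_iff_of_nonneg (hX i).1 (hY i).1).mp h0
    simp [(hX i).2 hX0 j, (hY i).2 hY0 j]

end CStarRing

section CStarAlgebra

variable {A : Type*} [NonUnitalCStarAlgebra A] [PartialOrder A] [StarOrderedRing A]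

theorem nonneg_of_smul_nonneg {p : A} (hp : 0 ≤ p) (hp0 : p ≠ 0) {c : ℂ} (h : 0 ≤ c • p) :
    0 ≤ c := by
  have hconj : (starRingEnd ℂ) c = c := by
    have hsa := h.isSelfAdjoint.star_eq
    rw [star_smul, hp.isSelfAdjoint.star_eq] at hsa
    simpa [← sub_smul, sub_eq_zero, hp0] using hsa
  obtain ⟨t, rfl⟩ : ∃ t : ℝ, (t : ℂ) = c := ⟨c.re, Complex.conj_eq_iff_re.mp hconj⟩
  rw [Complex.coe_smul] at h
  refine Complex.zero_le_real.mpr (le_of_not_gt fun ht => hp0 ?_)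
  have htp : t • p = 0 :=
    le_antisymm (by simpa using smul_nonneg (neg_nonneg.mpr ht.le) hp) h
  exact (smul_eq_zero.mp htp).resolve_left ht.ne

theorem nonneg_of_smul_sub_nonneg {p q : A} (hp : 0 ≤ p) (hp0 : p ≠ 0) (hpq : p * q = 0)
    {c : ℂ} (h : 0 ≤ c • (p - q)) : 0 ≤ c := by
  have hpsa := hp.isSelfAdjoint
  refine nonneg_of_smul_nonneg (star_left_conjugate_nonneg hp p) ?_ ?_
  · rw [hpsa.star_eq]
    exact fun h0 => hp0 (hpsa.eq_zero_of_mul_self_mul_self_eq_zero h0)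
  · have hconj := star_left_conjugate_nonneg h p
    rw [hpsa.star_eq] at hconj ⊢
    rwa [mul_smul_comm, smul_mul_assoc, mul_sub, sub_mul, hpq, zero_mul, sub_zero] at hconj

theorem eq_zero_of_smul_nonneg_of_eq_sub {x xp xm : A} (hxp : 0 ≤ xp) (hxm : 0 ≤ xm)
    (hsub : x = xp - xm) (horth : xp * xm = 0) (hxp0 : xp ≠ 0) (hxm0 : xm ≠ 0) {c : ℂ}
    (hc : 0 ≤ c • x) : c = 0 := by
  have horth' : xm * xp = 0 := by
    simpa [hxp.isSelfAdjoint.star_eq, hxm.isSelfAdjoint.star_eq] using congrArg star horth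
  refine le_antisymm ?_ (nonneg_of_smul_sub_nonneg hxp hxp0 horth (hsub ▸ hc))
  refine neg_nonneg.mp (nonneg_of_smul_sub_nonneg hxm hxm0 horth' ?_)
  rwa [neg_smul, ← smul_neg, neg_sub, ← hsub]

end CStarAlgebra

theorem stmt_15_general {A : Type*} [NonUnitalCStarAlgebra A] [PartialOrder A] [StarOrderedRing A]
    (x xp xm : A)
    (hxp : 0 ≤ xp) (hxm : 0 ≤ xm) (hsub : x = xp - xm) (horth : xp * xm = 0)
    (hxp0 : xp ≠ 0) (hxm0 : xm ≠ 0)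
    (M : ℕ → Type*) [∀ n, NonUnitalCStarAlgebra (M n)] [∀ n, PartialOrder (M n)]
    [∀ n, StarOrderedRing (M n)]
    (e : ∀ n, Matrix (Fin n) (Fin n) A ≃⋆ₐ[ℂ] M n) :
    (∀ (n : ℕ) (a : Matrix (Fin n) (Fin n) ℂ),
      0 ≤ (e n) (Matrix.of fun i j => a i j • x) → a = 0) ∧
    (∀ c : ℂ, 0 ≤ c • x → c • x = 0) := by
  have hscalar : ∀ c : ℂ, 0 ≤ c • x → c = 0 := fun _ hc =>
    eq_zero_of_smul_nonneg_of_eq_sub hxp hxm hsub horth hxp0 hxm0 hc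
  have hx0 : x ≠ 0 := fun h => one_ne_zero (hscalar 1 (by simp [h]))
  refine ⟨fun n a hpos => ?_, fun c hc => by rw [hscalar c hc, zero_smul]⟩
  have hX := Matrix.diag_nonneg_and_row_eq_zero_of_mem_closure
    (by simpa using map_mem_closure_star_mul_self (e n).symm (StarOrderedRing.nonneg_iff.mp hpos))
  ext i j
  have hdiag : a i i = 0 := hscalar _ (hX i).1
  exact (smul_eq_zero.mp ((hX i).2 (by simp [hdiag]) j)).resolve_right hx0

/-- **Lemma 5.1 (i).** Let `x` be a selfadjoint element of a C*-algebra `A`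
with nonzero positive and negative parts `xp`, `xm`.  Then `Mₙ(span{x})` meets the positive
cone of `Mₙ(A)` only at `0`: any matrix `(a i j • x)` which is positive in `Mₙ(A)` has
`a = 0`.  In particular `0 ≤ c • x` forces `c • x = 0`. -/
theorem stmt_15 {A : Type*} [NonUnitalCStarAlgebra A] [PartialOrder A] [StarOrderedRing A]
    (x xp xm : A) (hx : IsSelfAdjoint x)
    (hxp : 0 ≤ xp) (hxm : 0 ≤ xm) (hsub : x = xp - xm) (horth : xp * xm = 0)
    (hxp0 : xp ≠ 0) (hxm0 : xm ≠ 0)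
    (M : ℕ → Type*) [∀ n, NonUnitalCStarAlgebra (M n)] [∀ n, PartialOrder (M n)]
    [∀ n, StarOrderedRing (M n)]
    (e : ∀ n, Matrix (Fin n) (Fin n) A ≃⋆ₐ[ℂ] M n) :
    (∀ (n : ℕ) (a : Matrix (Fin n) (Fin n) ℂ),
      0 ≤ (e n) (Matrix.of fun i j => a i j • x) → a = 0) ∧
    (∀ c : ℂ, 0 ≤ c • x → c • x = 0) :=
  stmt_15_general x xp xm hxp hxm hsub horth hxp0 hxm0 M e
end

section
/- Let A be a C*-algebra and let x ∈ A with 0 ≤ x. Then for every n ∈ ℕ and every selfadjoint Y ∈ Mₙ(span{x}) there exist Y₁, Y₂ ∈ Mₙ(span{x}) with 0 ≤ Y₁ and 0 ≤ Y₂ in Mₙ(A), Y = Y₁ − Y₂, and max(‖Y₁‖, ‖Y₂‖) = ‖Y‖. (Concretely, if Y has entries (a i j) • x with a a hermitian complex matrix, one may take Y₁ with entries (a₊ i j) • x and Y₂ with entries (a₋ i j) • x, where a = a₊ − a₋ is the positive/negative-part decomposition of the hermitian matrix a.) In particular, span{x} is completely 1-generated. -/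
/-!
Replacing `a` by its real part, the matrix `a` may be taken hermitian; then `Y₁ = a₊ ⊗ x` and
`Y₂ = a₋ ⊗ x` work. They are positive because `b⋆b ⊗ x = (b ⊗ √x)⋆ (b ⊗ √x)`, and orthogonal
because `(a₊ ⊗ x)(a₋ ⊗ x) = a₊a₋ ⊗ x² = 0`. Orthogonal positive elements are the positive and
negative parts of their difference, so `‖Y₁ - Y₂‖ = max ‖Y₁‖ ‖Y₂‖`.
-/

open scoped MatrixOrder ComplexStarModule

lemma norm_sub_eq_max_of_mul_eq_zero {B : Type*} [NonUnitalCStarAlgebra B] [PartialOrder B]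
    [StarOrderedRing B] {p q : B} (hp : 0 ≤ p) (hq : 0 ≤ q) (hpq : p * q = 0) :
    ‖p - q‖ = max ‖p‖ ‖q‖ := by
  obtain ⟨hpos, hneg⟩ := CFC.posPart_negPart_unique rfl hpq hp hq
  rw [(hp.isSelfAdjoint.sub hq.isSelfAdjoint).norm_eq_max_norm_posPart_negPart, hpos, hneg]

namespace Matrix

variable {ι A : Type*}

/-- The matrix `a ⊗ x`; these matrices make up `Mₙ(span{x})`. -/
def smulRight [SMul ℂ A] (a : Matrix ι ι ℂ) (x : A) : Matrix ι ι A :=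
  of fun i j => a i j • x

section Module

variable [AddCommGroup A] [Module ℂ A]

@[simp]
lemma zero_smulRight (x : A) : (0 : Matrix ι ι ℂ).smulRight x = 0 := by
  ext i j
  exact zero_smul _ _

lemma smulRight_sub (a b : Matrix ι ι ℂ) (x : A) :
    (a - b).smulRight x = a.smulRight x - b.smulRight x := by
  ext i j
  exact sub_smul _ _ _

variable [StarAddMonoid A] [StarModule ℂ A]

lemma star_smulRight (a : Matrix ι ι ℂ) (x : A) :
    star (a.smulRight x) = (star a).smulRight (star x) := by
  ext i j
  exact star_smul _ _

lemma smulRight_realPart (a : Matrix ι ι ℂ) {x : A} (hx : IsSelfAdjoint x) :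
    (ℜ a : Matrix ι ι ℂ).smulRight x = ℜ (a.smulRight x) := by
  rw [realPart_apply_coe, realPart_apply_coe, star_smulRight, hx.star_eq]
  ext i j
  simp only [smulRight, of_apply, smul_apply, add_apply, smul_assoc, add_smul]

end Module

lemma smulRight_mul_smulRight [Fintype ι] [NonUnitalNonAssocSemiring A] [Module ℂ A]
    [IsScalarTower ℂ A A] [SMulCommClass ℂ A A] (a b : Matrix ι ι ℂ) (x y : A) :
    a.smulRight x * b.smulRight y = (a * b).smulRight (x * y) := by
  ext i j
  simp only [smulRight, mul_apply, of_apply, smul_mul_smul_comm, Finset.sum_smul]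

variable [Fintype ι] [DecidableEq ι] [NonUnitalCStarAlgebra A] [PartialOrder A]
  [StarOrderedRing A]

lemma exists_smulRight_eq_star_mul_self {c : Matrix ι ι ℂ} (hc : 0 ≤ c) {x : A} (hx : 0 ≤ x) :
    ∃ Z : Matrix ι ι A, c.smulRight x = star Z * Z := by
  obtain ⟨b, rfl⟩ := CStarAlgebra.nonneg_iff_eq_star_mul_self.mp hc
  refine ⟨b.smulRight (CFC.sqrt x), ?_⟩
  rw [star_smulRight, smulRight_mul_smulRight, (CFC.sqrt_nonneg x).isSelfAdjoint.star_eq,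
    CFC.sqrt_mul_sqrt_self x hx]

theorem exists_smulRight_jordanDecomposition {B F : Type*} [NonUnitalCStarAlgebra B]
    [PartialOrder B] [StarOrderedRing B] [FunLike F (Matrix ι ι A) B]
    [NonUnitalAlgHomClass F ℂ (Matrix ι ι A) B] [StarHomClass F (Matrix ι ι A) B]
    (f : F) {x : A} (hx : 0 ≤ x) (a : Matrix ι ι ℂ) (ha : IsSelfAdjoint (f (a.smulRight x))) :
    ∃ a₁ a₂ : Matrix ι ι ℂ, 0 ≤ f (a₁.smulRight x) ∧ 0 ≤ f (a₂.smulRight x) ∧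
      f (a.smulRight x) = f (a₁.smulRight x) - f (a₂.smulRight x) ∧
      max ‖f (a₁.smulRight x)‖ ‖f (a₂.smulRight x)‖ = ‖f (a.smulRight x)‖ := by
  -- `a` need not be hermitian, but its real part `c` represents the same element.
  obtain ⟨c, hc_sa, hc⟩ :
      ∃ c : Matrix ι ι ℂ, IsSelfAdjoint c ∧ f (a.smulRight x) = f (c.smulRight x) :=
    ⟨ℜ a, (ℜ a).2, by rw [smulRight_realPart a hx.isSelfAdjoint, map_realPart, ha.coe_realPart]⟩
  have hnonneg {d : Matrix ι ι ℂ} (hd : 0 ≤ d) : 0 ≤ f (d.smulRight x) := by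
    obtain ⟨Z, hZ⟩ := exists_smulRight_eq_star_mul_self hd hx
    rw [hZ, map_mul, map_star]
    exact star_mul_self_nonneg _
  have hsub : f (a.smulRight x) = f (c⁺.smulRight x) - f (c⁻.smulRight x) := by
    rw [hc, ← map_sub, ← smulRight_sub, CFC.posPart_sub_negPart c hc_sa]
  have horth : f (c⁺.smulRight x) * f (c⁻.smulRight x) = 0 := by
    rw [← map_mul, smulRight_mul_smulRight, CFC.posPart_mul_negPart, zero_smulRight, map_zero]
  have h₁ := hnonneg (CFC.posPart_nonneg c)
  have h₂ := hnonneg (CFC.negPart_nonneg c)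
  exact ⟨c⁺, c⁻, h₁, h₂, hsub, by rw [hsub, norm_sub_eq_max_of_mul_eq_zero h₁ h₂ horth]⟩

end Matrix

/-- **Lemma 5.1 (ii).** Let `x` be a positive element of a C*-algebra `A`.
Then every selfadjoint `Y ∈ Mₙ(span{x})` decomposes as `Y = Y₁ - Y₂` with
`Y₁, Y₂ ∈ Mₙ(span{x})` positive and `max ‖Y₁‖ ‖Y₂‖ = ‖Y‖`; i.e. `span{x}` is completely
1-generated.  (`Mₙ(A)` is realized via a family of ⋆-isomorphisms onto C*-algebras `M n`,
and `Y ∈ Mₙ(span{x})` means `Y` is the image of a matrix with entries `a i j • x`.) -/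
theorem stmt_16 {A : Type*} [NonUnitalCStarAlgebra A] [PartialOrder A] [StarOrderedRing A]
    (x : A) (hx : 0 ≤ x)
    (M : ℕ → Type*) [∀ n, NonUnitalCStarAlgebra (M n)] [∀ n, PartialOrder (M n)]
    [∀ n, StarOrderedRing (M n)]
    (e : ∀ n, Matrix (Fin n) (Fin n) A ≃⋆ₐ[ℂ] M n) :
    ∀ (n : ℕ) (Y : M n),
      (∃ a : Matrix (Fin n) (Fin n) ℂ, Y = (e n) (Matrix.of fun i j => a i j • x)) →
      star Y = Y →
      ∃ Y₁ Y₂ : M n,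
        (∃ a₁ : Matrix (Fin n) (Fin n) ℂ, Y₁ = (e n) (Matrix.of fun i j => a₁ i j • x)) ∧
        (∃ a₂ : Matrix (Fin n) (Fin n) ℂ, Y₂ = (e n) (Matrix.of fun i j => a₂ i j • x)) ∧
        0 ≤ Y₁ ∧ 0 ≤ Y₂ ∧ Y = Y₁ - Y₂ ∧ max ‖Y₁‖ ‖Y₂‖ = ‖Y‖ := by
  rintro n _ ⟨a, rfl⟩ hY
  obtain ⟨a₁, a₂, h₁, h₂, hsub, hnorm⟩ := Matrix.exists_smulRight_jordanDecomposition (e n) hx a hY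
  exact ⟨_, _, ⟨a₁, rfl⟩, ⟨a₂, rfl⟩, h₁, h₂, hsub, hnorm⟩
end

section
/- Let A be a unital C*-algebra and let x ∈ A be selfadjoint with x₊ ≠ 0 and x₋ ≠ 0, so that M := ‖x₊‖ > 0 and m' := ‖x₋‖ > 0 (M = max of the spectrum of x and −m' = min of the spectrum of x). Let K be a complex Hilbert space and T ∈ B(K) selfadjoint with decomposition T = T₊ − T₋. Then there exists a continuous ℂ-linear map Ψ : C(σ(x), ℂ) → B(K) on the continuous functions on the spectrum σ(x) of x such that: Ψ is positive (if f takes nonnegative real values on σ(x) then 0 ≤ Ψ f); Ψ applied to the inclusion function σ(x) → ℂ, z ↦ z, equals T; and ‖Ψ(1)‖ = max(‖T₊‖ / M, ‖T₋‖ / m') ≤ ‖T‖ / min(M, m'). (Composing Ψ with the continuous functional calculus of x yields a positive extension to C*(x,1) of the map span{x} → B(K), x ↦ T, with the stated norm bound.) -/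
/-!
Put `M = ‖x₊‖` and `m = ‖x₋‖`. Since `σ(x₊) = (σ x)₊` and `M ∈ σ(x₊)`, both `M` and `-m` lie in
`σ(x)`, so `Ψ g = g(M) • T₊ / M + g(-m) • T₋ / m` is a positive map sending `z ↦ z` to
`T₊ - T₋ = T`. The operators `T₊ / M` and `T₋ / m` are positive and orthogonal, so the norm of
their sum `Ψ 1` is the larger of their norms; finally `‖T₊‖, ‖T₋‖ ≤ ‖T‖`.
-/

open scoped ComplexOrder

theorem norm_add_eq_norm_sub_of_star_mul_eq_zero {E : Type*} [NonUnitalNormedRing E] [StarRing E]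
    [CStarRing E] {a b : E} (hab : star a * b = 0) (hba : star b * a = 0) :
    ‖a + b‖ = ‖a - b‖ := by
  have hsq : ‖a + b‖ * ‖a + b‖ = ‖a - b‖ * ‖a - b‖ := by
    simp only [← CStarRing.norm_star_mul_self, star_add, star_sub, add_mul, mul_add, sub_mul,
      mul_sub, hab, hba]
    congr 1
    abel
  nlinarith [norm_nonneg (a + b), norm_nonneg (a - b)]

namespace CStarAlgebra

variable {A : Type*} [CStarAlgebra A] [PartialOrder A] [StarOrderedRing A]

/-- `a` and `b` are the positive and negative parts of `a - b`, whose norm is that of `a + b`. -/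
theorem norm_add_eq_max_of_mul_eq_zero {a b : A} (ha : 0 ≤ a) (hb : 0 ≤ b) (hab : a * b = 0) :
    ‖a + b‖ = max ‖a‖ ‖b‖ := by
  have hba : b * a = 0 := by
    simpa [ha.isSelfAdjoint.star_eq, hb.isSelfAdjoint.star_eq] using congr_arg star hab
  obtain ⟨hpos, hneg⟩ := CFC.posPart_negPart_unique rfl hab
  rw [norm_add_eq_norm_sub_of_star_mul_eq_zero (by rwa [ha.isSelfAdjoint.star_eq])
      (by rwa [hb.isSelfAdjoint.star_eq]),
    (ha.isSelfAdjoint.sub hb.isSelfAdjoint).norm_eq_max_norm_posPart_negPart, hpos, hneg]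

theorem norm_posPart_mem_spectrum {a : A} (h : a⁺ ≠ 0) : ‖a⁺‖ ∈ spectrum ℝ a := by
  have : Nontrivial A := nontrivial_of_ne _ _ h
  have ha : IsSelfAdjoint a := by
    by_contra hna
    exact h (cfcₙ_apply_of_not_predicate a hna)
  have hmem : ‖a⁺‖ ∈ (fun t : ℝ ↦ t⁺) '' quasispectrum ℝ a := by
    rw [← cfcₙ_map_quasispectrum (fun t : ℝ ↦ t⁺) a, ← CFC.posPart_def]
    exact spectrum_subset_quasispectrum ℝ _ (norm_mem_spectrum_of_nonneg (CFC.posPart_nonneg a))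
  obtain ⟨t, ht, hteq : t⁺ = ‖a⁺‖⟩ := hmem
  have htpos : 0 < t := posPart_pos_iff.mp (hteq ▸ norm_pos_iff.mpr h)
  rw [← hteq, posPart_eq_self.mpr htpos.le]
  exact (mem_quasispectrum_iff.mp ht).resolve_left htpos.ne'

theorem neg_norm_negPart_mem_spectrum {a : A} (h : a⁻ ≠ 0) : -‖a⁻‖ ∈ spectrum ℝ a := by
  rw [← CFC.posPart_neg] at h ⊢
  simpa [spectrum.neg_eq] using Set.neg_mem_neg.mpr (norm_posPart_mem_spectrum h)

end CStarAlgebra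

namespace ContinuousMap

variable {X E : Type*} [TopologicalSpace X] [AddCommGroup E] [Module ℂ E] [TopologicalSpace E]
  [IsTopologicalAddGroup E] [ContinuousSMul ℂ E]

noncomputable def twoPointCLM (s t : X) (P Q : E) : C(X, ℂ) →L[ℂ] E :=
  (evalCLM ℂ s).smulRight P + (evalCLM ℂ t).smulRight Q

@[simp]
theorem twoPointCLM_apply (s t : X) (P Q : E) (g : C(X, ℂ)) :
    twoPointCLM s t P Q g = g s • P + g t • Q :=
  rfl

theorem twoPointCLM_nonneg [PartialOrder E] [IsOrderedAddMonoid E] [PosSMulMono ℂ E]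
    {s t : X} {P Q : E} (hP : 0 ≤ P) (hQ : 0 ≤ Q) {g : C(X, ℂ)} (hg : ∀ x, 0 ≤ g x) :
    0 ≤ twoPointCLM s t P Q g :=
  add_nonneg (smul_nonneg (hg s) hP) (smul_nonneg (hg t) hQ)

end ContinuousMap

theorem stmt_18_general {A : Type*} [CStarAlgebra A] [PartialOrder A] [StarOrderedRing A]
    (x xp xm : A)
    (hxp : 0 ≤ xp) (hxm : 0 ≤ xm) (hsub : x = xp - xm) (horth : xp * xm = 0)
    (hxp0 : xp ≠ 0) (hxm0 : xm ≠ 0)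
    (K : Type*) [NormedAddCommGroup K] [InnerProductSpace ℂ K] [CompleteSpace K]
    (T Tp Tm : K →L[ℂ] K)
    (hTp : 0 ≤ Tp) (hTm : 0 ≤ Tm) (hTsub : T = Tp - Tm) (hTorth : Tp * Tm = 0) :
    ∃ Ψ : C(spectrum ℂ x, ℂ) →L[ℂ] (K →L[ℂ] K),
      (∀ g : C(spectrum ℂ x, ℂ), (∀ t, 0 ≤ g t) → 0 ≤ Ψ g) ∧
      Ψ ⟨fun t => (t : ℂ), continuous_subtype_val⟩ = T ∧
      ‖Ψ 1‖ = max (‖Tp‖ / ‖xp‖) (‖Tm‖ / ‖xm‖) ∧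
      max (‖Tp‖ / ‖xp‖) (‖Tm‖ / ‖xm‖) ≤ ‖T‖ / min ‖xp‖ ‖xm‖ := by
  obtain ⟨rfl, rfl⟩ := CFC.posPart_negPart_unique hsub horth
  obtain ⟨rfl, rfl⟩ := CFC.posPart_negPart_unique hTsub hTorth
  have hM : 0 < ‖x⁺‖ := norm_pos_iff.mpr hxp0
  have hm : 0 < ‖x⁻‖ := norm_pos_iff.mpr hxm0
  have hMσ : (‖x⁺‖ : ℂ) ∈ spectrum ℂ x :=
    spectrum.algebraMap_mem ℂ (CStarAlgebra.norm_posPart_mem_spectrum hxp0)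
  have hmσ : ((-‖x⁻‖ : ℝ) : ℂ) ∈ spectrum ℂ x :=
    spectrum.algebraMap_mem ℂ (CStarAlgebra.neg_norm_negPart_mem_spectrum hxm0)
  have hP : 0 ≤ ‖x⁺‖⁻¹ • T⁺ := smul_nonneg (by positivity) hTp
  have hQ : 0 ≤ ‖x⁻‖⁻¹ • T⁻ := smul_nonneg (by positivity) hTm
  refine ⟨ContinuousMap.twoPointCLM ⟨_, hMσ⟩ ⟨_, hmσ⟩ (‖x⁺‖⁻¹ • T⁺) (‖x⁻‖⁻¹ • T⁻),
    fun g hg ↦ ContinuousMap.twoPointCLM_nonneg hP hQ hg, ?_, ?_, ?_⟩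
  · simp only [ContinuousMap.twoPointCLM_apply, ContinuousMap.coe_mk, Complex.coe_smul, smul_smul,
      mul_inv_cancel₀ hM.ne', mul_inv_cancel₀ hm.ne', neg_mul, neg_smul, one_smul,
      ← sub_eq_add_neg]
    exact hTsub.symm
  · rw [ContinuousMap.twoPointCLM_apply, ContinuousMap.one_apply, ContinuousMap.one_apply,
      one_smul, one_smul, CStarAlgebra.norm_add_eq_max_of_mul_eq_zero hP hQ (by simp [hTorth]),
      norm_smul, norm_smul, norm_inv, norm_inv, Real.norm_of_nonneg hM.le,
      Real.norm_of_nonneg hm.le, inv_mul_eq_div, inv_mul_eq_div]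
  · have hmin : 0 < min ‖x⁺‖ ‖x⁻‖ := lt_min hM hm
    exact max_le
      (div_le_div₀ (norm_nonneg T) (CStarAlgebra.norm_posPart_le T) hmin (min_le_left _ _))
      (div_le_div₀ (norm_nonneg T) (CStarAlgebra.norm_negPart_le T) hmin (min_le_right _ _))

/-- **Proposition 5.4, construction.** Let `x` be a selfadjoint element of a
unital C*-algebra with nonzero positive and negative parts `xp`, `xm`, and let `T ∈ B(K)` be
selfadjoint with parts `Tp`, `Tm`.  Then there is a positive continuous linear map
`Ψ : C(σ(x), ℂ) → B(K)` with `Ψ(z ↦ z) = T` and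
`‖Ψ(1)‖ = max (‖Tp‖/‖xp‖) (‖Tm‖/‖xm‖) ≤ ‖T‖ / min ‖xp‖ ‖xm‖`. -/
theorem stmt_18 {A : Type*} [CStarAlgebra A] [PartialOrder A] [StarOrderedRing A]
    (x xp xm : A) (hx : IsSelfAdjoint x)
    (hxp : 0 ≤ xp) (hxm : 0 ≤ xm) (hsub : x = xp - xm) (horth : xp * xm = 0)
    (hxp0 : xp ≠ 0) (hxm0 : xm ≠ 0)
    (K : Type*) [NormedAddCommGroup K] [InnerProductSpace ℂ K] [CompleteSpace K]
    (T Tp Tm : K →L[ℂ] K) (hT : IsSelfAdjoint T)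
    (hTp : 0 ≤ Tp) (hTm : 0 ≤ Tm) (hTsub : T = Tp - Tm) (hTorth : Tp * Tm = 0) :
    ∃ Ψ : C(spectrum ℂ x, ℂ) →L[ℂ] (K →L[ℂ] K),
      (∀ g : C(spectrum ℂ x, ℂ), (∀ t, 0 ≤ g t) → 0 ≤ Ψ g) ∧
      Ψ ⟨fun t => (t : ℂ), continuous_subtype_val⟩ = T ∧
      ‖Ψ 1‖ = max (‖Tp‖ / ‖xp‖) (‖Tm‖ / ‖xm‖) ∧
      max (‖Tp‖ / ‖xp‖) (‖Tm‖ / ‖xm‖) ≤ ‖T‖ / min ‖xp‖ ‖xm‖ :=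
  stmt_18_general x xp xm hxp hxm hsub horth hxp0 hxm0 K T Tp Tm hTp hTm hTsub hTorth
end

section
/- In the C*-algebra M₂(ℂ), let A = !![1, 1; 1, 1] and B' = !![0, 0; 0, 1], and let E = span_ℂ{A, B'} (a selfadjoint subspace; A and B' are linearly independent). Define the ℂ-linear functional φ : E → ℂ by φ(α•A + β•B') = β/√2. Then: (a) ‖φ‖ = 1, where E carries the operator norm of M₂(ℂ); (b) φ is positive on E, i.e., φ(p) is a nonnegative real for every p ∈ E with 0 ≤ p (indeed {p ∈ E : 0 ≤ p} = {α•A + β•B' : α, β ∈ ℝ, α ≥ 0, β ≥ 0}); but (c) there is no positive linear functional ψ : M₂(ℂ) → ℂ with ‖ψ‖ ≤ 1 and ψ|_E = φ. Equivalently, there is no positive semidefinite ρ ∈ M₂(ℂ) with trace ρ = 1, Tr(ρ·A) = 0 and Tr(ρ·B') = 1/√2. -/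
/-!
Every element of `E` is `α • A + β • B'`, and it is positive semidefinite iff `α, β ≥ 0`
(test against `(1, 0)` and `(1, -1)`); this gives the cone and the positivity of `φ`. Testing
`α • A + β • B'` against `(1, -1)` gives `|β| ≤ √2 ‖α • A + β • B'‖`, so `‖φ‖ ≤ 1`, with equality
at the self-adjoint unitary `-(1/√2) • A + √2 • B'`. Finally, any functional `f` with `f(A) = 0`,
`f(B') = 1/√2` and `f(1) ≤ 1` is negative on the positive rank-one matrix
`P = (2, 1)(2, 1)* = 2A + 2·1 - 3B'`, because `f(P) ≤ 2 - 3/√2 < 0`. A contractive positive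
extension `ψ` has `0 ≤ ψ(1) ≤ ‖ψ‖ ≤ 1`, and a density matrix `ρ` gives `f = Tr(ρ ·)` with
`f(1) = 1`.
-/

open scoped ComplexOrder Matrix.Norms.L2Operator

open Matrix

local notation "𝔸" => (!![1, 1; 1, 1] : Matrix (Fin 2) (Fin 2) ℂ)
local notation "𝔹" => (!![0, 0; 0, 1] : Matrix (Fin 2) (Fin 2) ℂ)

lemma Matrix.PosSemidef.trace_mul_vecMulVec_star_nonneg {n R : Type*} [Fintype n] [CommRing R]
    [PartialOrder R] [StarRing R] {ρ : Matrix n n R} (hρ : ρ.PosSemidef) (v : n → R) :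
    0 ≤ (ρ * vecMulVec v (star v)).trace := by
  rw [mul_vecMulVec, trace_vecMulVec, dotProduct_comm]
  exact hρ.dotProduct_mulVec_nonneg v

lemma Complex.le_one_of_nonneg_of_norm_le_one {z : ℂ} (h0 : 0 ≤ z) (h : ‖z‖ ≤ 1) : z ≤ 1 :=
  Complex.le_def.2 ⟨(Complex.re_le_norm z).trans h, (Complex.nonneg_iff.1 h0).2.symm⟩

lemma posSemidef_smul_add_smul_iff (α β : ℂ) :
    (α • 𝔸 + β • 𝔹).PosSemidef ↔ 0 ≤ α ∧ 0 ≤ β := by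
  constructor
  · intro h
    constructor
    · simpa [mulVec, dotProduct, Fin.sum_univ_two] using h.dotProduct_mulVec_nonneg ![1, 0]
    · simpa [mulVec, dotProduct, Fin.sum_univ_two] using h.dotProduct_mulVec_nonneg ![1, -1]
  · rintro ⟨hα, hβ⟩
    have hA : 𝔸 = vecMulVec ![1, 1] (star ![1, 1]) := by
      ext i j; fin_cases i <;> fin_cases j <;> simp [vecMulVec]
    have hB : 𝔹 = diagonal ![0, 1] := by
      ext i j; fin_cases i <;> fin_cases j <;> simp
    rw [hA, hB]
    exact ((posSemidef_vecMulVec_self_star _).smul hα).add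
      ((PosSemidef.diagonal (by simp [Pi.le_def, Fin.forall_fin_two])).smul hβ)

lemma norm_le_sqrt_two_mul_norm_smul_add_smul (α β : ℂ) :
    ‖β‖ ≤ √2 * ‖α • 𝔸 + β • 𝔹‖ := by
  have key := l2_opNorm_mulVec (α • 𝔸 + β • 𝔹) !₂[(1 : ℂ), -1]
  have hx : ‖!₂[(1 : ℂ), -1]‖ = √2 := by
    rw [EuclideanSpace.norm_eq]; norm_num [Fin.sum_univ_two]
  have hMx : (α • 𝔸 + β • 𝔹) *ᵥ !₂[(1 : ℂ), -1] = ![0, -β] := by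
    ext i; fin_cases i <;> simp [mulVec, dotProduct, Fin.sum_univ_two]
  rw [hx, hMx, EuclideanSpace.norm_eq] at key
  simpa [Fin.sum_univ_two, mul_comm] using key

lemma neg_inv_sqrt_two_smul_add_sqrt_two_smul_mem_unitary :
    (-(√2 : ℂ)⁻¹) • 𝔸 + (√2 : ℂ) • 𝔹 ∈ unitary (Matrix (Fin 2) (Fin 2) ℂ) := by
  have h2 : (√2 : ℂ) ^ 2 = 2 := by
    rw [← Complex.ofReal_pow, Real.sq_sqrt zero_le_two]; norm_num
  rw [← unitaryGroup, mem_unitaryGroup_iff]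
  ext i j
  fin_cases i <;> fin_cases j <;>
    simp [mul_apply, Fin.sum_univ_two, Complex.conj_ofReal] <;> field_simp <;> norm_num [h2]

lemma not_nonneg_apply_vecMulVec_of_apply_one_le (f : Matrix (Fin 2) (Fin 2) ℂ →ₗ[ℂ] ℂ)
    (h1 : f 1 ≤ 1) (hA : f 𝔸 = 0) (hB : f 𝔹 = 1 / (√2 : ℂ)) :
    ¬ 0 ≤ f (vecMulVec ![2, 1] (star ![2, 1])) := by
  have hP : vecMulVec ![2, 1] (star ![2, 1]) = (2 : ℂ) • 𝔸 + (2 : ℂ) • 1 - (3 : ℂ) • 𝔹 := by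
    ext i j; fin_cases i <;> fin_cases j <;> norm_num [vecMulVec, map_ofNat (starRingEnd ℂ)]
  have hsqrt : 4 < 3 * √2 := by
    nlinarith [Real.sq_sqrt (zero_le_two (α := ℝ)), Real.sqrt_nonneg 2]
  rw [hP, map_sub, map_add, map_smul, map_smul, map_smul, hA, hB, Complex.nonneg_iff]
  rw [Complex.le_def] at h1
  simp only [smul_eq_mul, mul_zero, zero_add, Complex.sub_re, Complex.mul_re]
  norm_num [Complex.div_ofReal_re] at h1 ⊢
  intro h _
  linarith [h1.1]

section Functional

variable {E : Submodule ℂ (Matrix (Fin 2) (Fin 2) ℂ)} {φ : E →L[ℂ] ℂ}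

lemma exists_smul_add_smul_eq_of_mem (hE : E = Submodule.span ℂ {𝔸, 𝔹})
    {p : Matrix (Fin 2) (Fin 2) ℂ} (hp : p ∈ E) : ∃ α β : ℂ, α • 𝔸 + β • 𝔹 = p :=
  Submodule.mem_span_pair.1 (hE ▸ hp)

lemma smul_add_smul_mem (hE : E = Submodule.span ℂ {𝔸, 𝔹}) (α β : ℂ) : α • 𝔸 + β • 𝔹 ∈ E :=
  hE ▸ Submodule.mem_span_pair.2 ⟨α, β, rfl⟩

lemma apply_eq_of_smul_add_smul_eq
    (hφ : ∀ (α β : ℂ) (h : α • 𝔸 + β • 𝔹 ∈ E), φ ⟨α • 𝔸 + β • 𝔹, h⟩ = β / (√2 : ℂ))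
    {p : Matrix (Fin 2) (Fin 2) ℂ} (hp : p ∈ E) {α β : ℂ} (h : α • 𝔸 + β • 𝔹 = p) :
    φ ⟨p, hp⟩ = β / (√2 : ℂ) := by
  subst h
  exact hφ α β hp

lemma opNorm_eq_one (hE : E = Submodule.span ℂ {𝔸, 𝔹})
    (hφ : ∀ (α β : ℂ) (h : α • 𝔸 + β • 𝔹 ∈ E), φ ⟨α • 𝔸 + β • 𝔹, h⟩ = β / (√2 : ℂ)) :
    ‖φ‖ = 1 := by
  apply le_antisymm
  · refine φ.opNorm_le_bound zero_le_one fun ⟨p, hp⟩ => ?_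
    obtain ⟨α, β, rfl⟩ := exists_smul_add_smul_eq_of_mem hE hp
    rw [hφ, norm_div, Complex.norm_real, Real.norm_of_nonneg (Real.sqrt_nonneg 2), one_mul,
      div_le_iff₀ (by positivity), mul_comm]
    exact norm_le_sqrt_two_mul_norm_smul_add_smul α β
  · have hM := smul_add_smul_mem hE (-(√2 : ℂ)⁻¹) (√2 : ℂ)
    have hnorm : ‖(⟨_, hM⟩ : E)‖ = 1 :=
      CStarRing.norm_of_mem_unitary neg_inv_sqrt_two_smul_add_sqrt_two_smul_mem_unitary
    have h := φ.le_opNorm ⟨_, hM⟩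
    rwa [hφ, hnorm, mul_one, div_self (by simp), norm_one] at h

lemma nonneg_apply_of_posSemidef (hE : E = Submodule.span ℂ {𝔸, 𝔹})
    (hφ : ∀ (α β : ℂ) (h : α • 𝔸 + β • 𝔹 ∈ E), φ ⟨α • 𝔸 + β • 𝔹, h⟩ = β / (√2 : ℂ))
    {p : Matrix (Fin 2) (Fin 2) ℂ} (hp : p ∈ E) (hpsd : p.PosSemidef) : 0 ≤ φ ⟨p, hp⟩ := by
  obtain ⟨α, β, rfl⟩ := exists_smul_add_smul_eq_of_mem hE hp
  rw [hφ]
  exact div_nonneg ((posSemidef_smul_add_smul_iff α β).1 hpsd).2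
    (Complex.zero_le_real.2 (Real.sqrt_nonneg 2))

lemma setOf_mem_and_posSemidef_eq (hE : E = Submodule.span ℂ {𝔸, 𝔹}) :
    {p | p ∈ E ∧ p.PosSemidef} =
      {m | ∃ α β : ℝ, 0 ≤ α ∧ 0 ≤ β ∧ m = (α : ℂ) • 𝔸 + (β : ℂ) • 𝔹} := by
  ext p
  constructor
  · rintro ⟨hp, hpsd⟩
    obtain ⟨α, β, rfl⟩ := exists_smul_add_smul_eq_of_mem hE hp
    obtain ⟨hα, hβ⟩ := (posSemidef_smul_add_smul_iff α β).1 hpsd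
    obtain ⟨a, ha, rfl⟩ := RCLike.nonneg_iff_exists_ofReal.1 hα
    obtain ⟨b, hb, rfl⟩ := RCLike.nonneg_iff_exists_ofReal.1 hβ
    exact ⟨a, b, ha, hb, rfl⟩
  · rintro ⟨α, β, hα, hβ, rfl⟩
    exact ⟨smul_add_smul_mem hE _ _, (posSemidef_smul_add_smul_iff _ _).2
      ⟨Complex.zero_le_real.2 hα, Complex.zero_le_real.2 hβ⟩⟩

lemma not_exists_positive_extension_of_norm_le_one (hE : E = Submodule.span ℂ {𝔸, 𝔹})
    (hφ : ∀ (α β : ℂ) (h : α • 𝔸 + β • 𝔹 ∈ E), φ ⟨α • 𝔸 + β • 𝔹, h⟩ = β / (√2 : ℂ)) :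
    ¬ ∃ ψ : Matrix (Fin 2) (Fin 2) ℂ →L[ℂ] ℂ,
      (∀ p : Matrix (Fin 2) (Fin 2) ℂ, p.PosSemidef → 0 ≤ ψ p) ∧ ‖ψ‖ ≤ 1 ∧
      ∀ (p : Matrix (Fin 2) (Fin 2) ℂ) (hp : p ∈ E), ψ p = φ ⟨p, hp⟩ := by
  rintro ⟨ψ, hpos, hnorm, hext⟩
  have hψ1 : ψ 1 ≤ 1 := Complex.le_one_of_nonneg_of_norm_le_one (hpos 1 PosSemidef.one) <| by
    simpa using (ψ.le_opNorm 1).trans (by simpa using hnorm)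
  have hA : ψ 𝔸 = 0 := by
    have h𝔸 : 𝔸 ∈ E := by simpa using smul_add_smul_mem hE 1 0
    rw [hext _ h𝔸, apply_eq_of_smul_add_smul_eq hφ h𝔸 (α := 1) (β := 0) (by simp), zero_div]
  have hB : ψ 𝔹 = 1 / (√2 : ℂ) := by
    have h𝔹 : 𝔹 ∈ E := by simpa using smul_add_smul_mem hE 0 1
    rw [hext _ h𝔹, apply_eq_of_smul_add_smul_eq hφ h𝔹 (α := 0) (β := 1) (by simp)]
  exact not_nonneg_apply_vecMulVec_of_apply_one_le ψ.toLinearMap hψ1 hA hB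
    (hpos _ (posSemidef_vecMulVec_self_star _))

end Functional

lemma not_exists_density_matrix :
    ¬ ∃ ρ : Matrix (Fin 2) (Fin 2) ℂ, ρ.PosSemidef ∧ ρ.trace = 1 ∧
      (ρ * 𝔸).trace = 0 ∧ (ρ * 𝔹).trace = 1 / (√2 : ℂ) := by
  rintro ⟨ρ, hρ, htr, hA, hB⟩
  let f := traceLinearMap (Fin 2) ℂ ℂ ∘ₗ LinearMap.mulLeft ℂ ρ
  exact not_nonneg_apply_vecMulVec_of_apply_one_le f (by simp [f, htr]) hA hB
    (hρ.trace_mul_vecMulVec_star_nonneg _)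

/-- **Example 4.18.** In `M₂(ℂ)` (with the operator norm), let
`A = !![1,1;1,1]`, `B' = !![0,0;0,1]`, `E = span{A, B'}` and let `φ : E → ℂ` be the
functional `φ(α•A + β•B') = β/√2`.  Then `‖φ‖ = 1`, `φ` is positive (and the positive cone
of `E` is `{α•A + β•B' : α, β ≥ 0}`), yet `φ` admits no contractive positive extension to
`M₂(ℂ)`; equivalently there is no density matrix `ρ` with `Tr(ρA) = 0`, `Tr(ρB') = 1/√2`. -/
theorem stmt_19
    (E : Submodule ℂ (Matrix (Fin 2) (Fin 2) ℂ))
    (hE : E = Submodule.span ℂ {!![1, 1; 1, 1], !![0, 0; 0, 1]})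
    (φ : E →L[ℂ] ℂ)
    (hφ : ∀ (α β : ℂ) (h : α • !![1, 1; 1, 1] + β • !![0, 0; 0, 1] ∈ E),
      φ ⟨α • !![1, 1; 1, 1] + β • !![0, 0; 0, 1], h⟩ = β / (Real.sqrt 2 : ℂ)) :
    -- (a) `‖φ‖ = 1`
    ‖φ‖ = 1 ∧
    -- (b) `φ` is positive on `E`
    (∀ (p : Matrix (Fin 2) (Fin 2) ℂ) (hp : p ∈ E), p.PosSemidef → 0 ≤ φ ⟨p, hp⟩) ∧
    -- (the positive cone of `E`)
    ({p : Matrix (Fin 2) (Fin 2) ℂ | p ∈ E ∧ p.PosSemidef} =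
      {m : Matrix (Fin 2) (Fin 2) ℂ | ∃ α β : ℝ, 0 ≤ α ∧ 0 ≤ β ∧
        m = (α : ℂ) • !![1, 1; 1, 1] + (β : ℂ) • !![0, 0; 0, 1]}) ∧
    -- (c) no contractive positive extension to `M₂(ℂ)`
    (¬ ∃ ψ : Matrix (Fin 2) (Fin 2) ℂ →L[ℂ] ℂ,
      (∀ p : Matrix (Fin 2) (Fin 2) ℂ, p.PosSemidef → 0 ≤ ψ p) ∧ ‖ψ‖ ≤ 1 ∧
      ∀ (p : Matrix (Fin 2) (Fin 2) ℂ) (hp : p ∈ E), ψ p = φ ⟨p, hp⟩) ∧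
    -- equivalently, no density matrix implements an extension
    (¬ ∃ ρ : Matrix (Fin 2) (Fin 2) ℂ, ρ.PosSemidef ∧ ρ.trace = 1 ∧
      (ρ * !![1, 1; 1, 1]).trace = 0 ∧ (ρ * !![0, 0; 0, 1]).trace = 1 / (Real.sqrt 2 : ℂ)) :=
  ⟨opNorm_eq_one hE hφ, fun _ hp => nonneg_apply_of_posSemidef hE hφ hp,
    setOf_mem_and_posSemidef_eq hE, not_exists_positive_extension_of_norm_le_one hE hφ,
    not_exists_density_matrix⟩
end
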